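/- arXiv:2511.10066 — 9 statements merged into one kernel-verified Lean document; each statement's English description precedes it below -/
import Mathlib

section
/- Let A₁, A₂ be k₁×n₁ matrices and B₁, B₂ be k₂×n₂ matrices over a finite field K with n_{A₁} ≥ n_{A₂}. Let M be the vertical stacking of A₁⊗B₁ and A₂⊗B₂. Then n_M ≥ min( n_{A₁}, n_{A₂}·n_{B₁}, n_{B₁₊₂} ), where B₁₊₂ is the vertical stacking of B₁ and B₂. -/
/-!
Write a kernel vector of `M` supported on a set `s` of `d` columns as `vec X` for an
`n₂ × n₁` matrix `X`, so that `B₁ X A₁ᵀ = 0` and `B₂ X A₂ᵀ = 0`. The rows of `B₁ X` are kernel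
vectors of `A₁` supported on at most `d ≤ n_{A₁}` coordinates, so `B₁ X = 0`: every nonzero
column of `X` is a kernel vector of `B₁` and so has more than `n_{B₁}` nonzero entries. As
`d ≤ n_{A₂} n_{B₁}`, at most `n_{A₂}` columns of `X` are nonzero, and the same argument with
`A₂` gives `B₂ X = 0`. Each column of `X` is then a kernel vector of `B₁₊₂` with at most
`d ≤ n_{B₁₊₂}` nonzero entries, hence zero.
-/

open Kronecker

/-- `colIndepMax A` is the largest `j` (at most the number of columns) such that
every set of `j` columns of `A` is linearly independent. -/
noncomputable def colIndepMax {K m n : Type*} [Field K] [Fintype n] (A : Matrix m n K) : ℕ :=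
  sSup {j | j ≤ Fintype.card n ∧
    ∀ s : Finset n, s.card = j →
      LinearIndependent K (fun i : {x // x ∈ s} => A.transpose i.1)}

open Finset Matrix Function

section
variable {K m n : Type*} [Field K] [Fintype n]

theorem linearIndependent_cols_iff (A : Matrix m n K) (s : Finset n) :
    LinearIndependent K (fun i : s => Aᵀ i) ↔
      ∀ v : n → K, support v ⊆ s → A *ᵥ v = 0 → v = 0 := by
  change LinearIndepOn K (fun i => Aᵀ i) (s : Set n) ↔ _
  rw [linearIndepOn_iff, Finsupp.equivFunOnFinite.forall_congr_left]
  refine forall_congr' fun v => ?_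
  simp [Finsupp.mem_supported, Finsupp.linearCombination_apply, Finsupp.sum_fintype,
    mulVec_eq_sum, ← Finsupp.coe_eq_zero]

theorem colIndepMax_mem (A : Matrix m n K) :
    colIndepMax A ∈ {j | j ≤ Fintype.card n ∧
      ∀ s : Finset n, #s = j → LinearIndependent K (fun i : s => Aᵀ i)} :=
  Nat.sSup_mem ⟨0, Nat.zero_le _, fun s hs => by
      rw [card_eq_zero.mp hs]; exact linearIndependent_empty_type⟩
    ⟨Fintype.card n, fun _ hj => hj.1⟩

theorem le_colIndepMax_of_mulVec {A : Matrix m n K} {d : ℕ} (hd : d ≤ Fintype.card n)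
    (h : ∀ s : Finset n, #s = d → ∀ v : n → K, support v ⊆ s → A *ᵥ v = 0 → v = 0) :
    d ≤ colIndepMax A :=
  le_csSup ⟨Fintype.card n, fun _ hj => hj.1⟩
    ⟨hd, fun s hs => (linearIndependent_cols_iff A s).mpr (h s hs)⟩

theorem eq_zero_of_mulVec_eq_zero {A : Matrix m n K} {t : Finset n}
    (ht : #t ≤ colIndepMax A) {v : n → K} (hv : support v ⊆ t) (hAv : A *ᵥ v = 0) : v = 0 := by
  obtain ⟨hA, hindep⟩ := colIndepMax_mem A
  obtain ⟨s, hts, hs⟩ := exists_superset_card_eq ht hA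
  exact (linearIndependent_cols_iff A s).mp (hindep s hs) v (hv.trans (by exact_mod_cast hts)) hAv

theorem mul_eq_zero_of_mul_mul_transpose_eq_zero {l k : Type*} [Fintype l]
    {A : Matrix m n K} (B : Matrix k l K) {X : Matrix l n K} {t : Finset n}
    (ht : #t ≤ colIndepMax A) (hX : ∀ i ∉ t, ∀ j, X j i = 0) (h : B * X * Aᵀ = 0) :
    B * X = 0 := by
  ext b i
  have hrow : A *ᵥ (B * X) b = 0 := by
    rw [← vecMul_transpose]
    exact congrFun h b
  refine congrFun (eq_zero_of_mulVec_eq_zero ht (fun i hi => ?_) hrow) i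
  by_contra hit
  exact hi (by simp [mul_apply, hX i hit])

end

theorem Matrix.mulVec_col_eq_zero_of_mul_eq_zero {R k l n : Type*}
    [NonUnitalNonAssocSemiring R] [Fintype l] {B : Matrix k l R} {X : Matrix l n R}
    (h : B * X = 0) (i : n) : B *ᵥ Xᵀ i = 0 :=
  funext fun b => congrFun (congrFun h b) i

theorem Finset.card_mul_le_card_of_le_card_fiber {α β : Type*} [DecidableEq α]
    {s : Finset (α × β)} {R : Finset α} {k : ℕ} (h : ∀ i ∈ R, k ≤ #{p ∈ s | p.1 = i}) :
    #R * k ≤ #s :=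
  calc #R * k = ∑ _i ∈ R, k := by rw [sum_const, smul_eq_mul]
    _ ≤ ∑ i ∈ R, #{p ∈ s | p.1 = i} := sum_le_sum h
    _ = #{p ∈ s | p.1 ∈ R} := sum_card_fiberwise_eq_card_filter s R Prod.fst
    _ ≤ #s := card_filter_le s _

section
variable {K m₁ m₂ k₁ k₂ n₁ n₂ : Type*} [Field K] [Fintype n₁] [Fintype n₂]

theorem eq_zero_of_fromRows_kronecker_mulVec_vec_eq_zero
    {A₁ : Matrix m₁ n₁ K} {A₂ : Matrix m₂ n₁ K} {B₁ : Matrix k₁ n₂ K} {B₂ : Matrix k₂ n₂ K}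
    {X : Matrix n₂ n₁ K} {s : Finset (n₁ × n₂)}
    (hXs : support (vec X) ⊆ s) (hA₁ : #s ≤ colIndepMax A₁)
    (hA₂B₁ : #s ≤ colIndepMax A₂ * colIndepMax B₁) (hB : #s ≤ colIndepMax (fromRows B₁ B₂))
    (hX : fromRows (A₁ ⊗ₖ B₁) (A₂ ⊗ₖ B₂) *ᵥ vec X = 0) : X = 0 := by
  classical
  rw [fromRows_mulVec, kronecker_mulVec_vec, kronecker_mulVec_vec] at hX
  have h₁ : B₁ * X * A₁ᵀ = 0 := vec_eq_zero_iff.mp (funext fun p => congrFun hX (.inl p))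
  have h₂ : B₂ * X * A₂ᵀ = 0 := vec_eq_zero_iff.mp (funext fun p => congrFun hX (.inr p))
  have hXs' : ∀ i j, X j i ≠ 0 → (i, j) ∈ s := fun i j hij => hXs (by simpa using hij)
  set F : n₁ → Finset n₂ := fun i => {p ∈ s | p.1 = i}.image Prod.snd
  have hcol : ∀ i, support (Xᵀ i) ⊆ F i := fun i j hij =>
    mem_image.mpr ⟨(i, j), mem_filter.mpr ⟨hXs' i j hij, rfl⟩, rfl⟩
  have hB₁X : B₁ * X = 0 := by
    refine mul_eq_zero_of_mul_mul_transpose_eq_zero B₁ (t := s.image Prod.fst)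
      (card_image_le.trans hA₁) (fun i hi j => ?_) h₁
    by_contra hij
    exact hi (mem_image_of_mem Prod.fst (hXs' i j hij))
  set R : Finset n₁ := {i | ∃ j, X j i ≠ 0}
  have hR : ∀ i ∈ R, colIndepMax B₁ + 1 ≤ #{p ∈ s | p.1 = i} := by
    intro i hi
    obtain ⟨j, hj⟩ := (mem_filter.mp hi).2
    by_contra! hsmall
    have hF : #(F i) ≤ colIndepMax B₁ := card_image_le.trans (Nat.le_of_lt_succ hsmall)
    exact hj (congrFun (eq_zero_of_mulVec_eq_zero hF (hcol i)
      (mulVec_col_eq_zero_of_mul_eq_zero hB₁X i)) j)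
  have hRcard : #R ≤ colIndepMax A₂ := by
    have := card_mul_le_card_of_le_card_fiber hR
    by_contra! hbig
    nlinarith
  have hB₂X : B₂ * X = 0 := by
    refine mul_eq_zero_of_mul_mul_transpose_eq_zero B₂ hRcard (fun i hi j => ?_) h₂
    by_contra hij
    exact hi (mem_filter.mpr ⟨mem_univ i, j, hij⟩)
  ext j i
  have hF : #(F i) ≤ colIndepMax (fromRows B₁ B₂) :=
    card_image_le.trans ((card_filter_le s _).trans hB)
  refine congrFun (eq_zero_of_mulVec_eq_zero hF (hcol i) ?_) j
  rw [fromRows_mulVec, mulVec_col_eq_zero_of_mul_eq_zero hB₁X,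
    mulVec_col_eq_zero_of_mul_eq_zero hB₂X, Sum.elim_zero_zero]

end

theorem stmt2_general {K : Type*} [Field K] {k₁ k₂ n₁ n₂ : ℕ}
    (A₁ A₂ : Matrix (Fin k₁) (Fin n₁) K) (B₁ B₂ : Matrix (Fin k₂) (Fin n₂) K) :
    min (colIndepMax A₁) (min (colIndepMax A₂ * colIndepMax B₁)
        (colIndepMax (Matrix.fromRows B₁ B₂))) ≤
      colIndepMax (Matrix.fromRows (A₁ ⊗ₖ B₁) (A₂ ⊗ₖ B₂)) := by
  set d := min (colIndepMax A₁) (min (colIndepMax A₂ * colIndepMax B₁)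
    (colIndepMax (fromRows B₁ B₂)))
  have hA₁ : d ≤ colIndepMax A₁ := min_le_left _ _
  have hA₂B₁ : d ≤ colIndepMax A₂ * colIndepMax B₁ := (min_le_right _ _).trans (min_le_left _ _)
  have hB : d ≤ colIndepMax (fromRows B₁ B₂) := (min_le_right _ _).trans (min_le_right _ _)
  refine le_colIndepMax_of_mulVec ?_ fun s hs v hv hMv => ?_
  · have hn₁ : d ≤ n₁ := by simpa using hA₁.trans (colIndepMax_mem A₁).1
    have hn₂ : d ≤ n₂ := by simpa using hB.trans (colIndepMax_mem (fromRows B₁ B₂)).1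
    rw [Fintype.card_prod, Fintype.card_fin, Fintype.card_fin]
    rcases Nat.eq_zero_or_pos n₂ with hn₂0 | hn₂0
    · omega
    · exact hn₁.trans (Nat.le_mul_of_pos_right n₁ hn₂0)
  obtain ⟨X, rfl⟩ := vec_bijective.surjective v
  rw [eq_zero_of_fromRows_kronecker_mulVec_vec_eq_zero hv (hs ▸ hA₁) (hs ▸ hA₂B₁) (hs ▸ hB) hMv,
    vec_zero]

theorem stmt2 {K : Type*} [Field K] {k₁ k₂ n₁ n₂ : ℕ}
    (A₁ A₂ : Matrix (Fin k₁) (Fin n₁) K) (B₁ B₂ : Matrix (Fin k₂) (Fin n₂) K)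
    (h : colIndepMax A₂ ≤ colIndepMax A₁) :
    min (colIndepMax A₁) (min (colIndepMax A₂ * colIndepMax B₁)
        (colIndepMax (Matrix.fromRows B₁ B₂))) ≤
      colIndepMax (Matrix.fromRows (A₁ ⊗ₖ B₁) (A₂ ⊗ₖ B₂)) :=
  stmt2_general A₁ A₂ B₁ B₂
end

section
/- Let s ≥ 1, let A₁,…,A_s be k₁×n₁ matrices and B₁,…,B_s be k₂×n₂ matrices over a finite field K with n_{A₁} ≥ n_{A₂} ≥ … ≥ n_{A_s}. Let M be the vertical stacking of A₁⊗B₁, …, A_s⊗B_s. Then n_M ≥ min{ n_{A₁}, n_{A₂}·n_{B₁}, n_{A₃}·n_{B₁₊₂}, …, n_{A_s}·n_{B₁₊⋯₊(s−1)}, n_{B₁₊⋯₊s} }, where B₁₊⋯₊j denotes the vertical stacking of B₁,…,B_j. -/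
open Kronecker

/-- vertical stacking of the first `j` matrices of the family `B`. -/
def stackFam {K : Type*} {s k₂ n₂ : ℕ} (B : Fin s → Matrix (Fin k₂) (Fin n₂) K)
    (j : ℕ) (hj : j ≤ s) : Matrix (Fin j × Fin k₂) (Fin n₂) K :=
  Matrix.of fun p c => B ⟨p.1.1, lt_of_lt_of_le p.1.2 hj⟩ p.2 c

/-- vertical stacking of the Kronecker products `A i ⊗ B i`. -/
def kronStack {K : Type*} [Mul K] {s k₁ k₂ n₁ n₂ : ℕ}
    (A : Fin s → Matrix (Fin k₁) (Fin n₁) K) (B : Fin s → Matrix (Fin k₂) (Fin n₂) K) :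
    Matrix (Fin s × (Fin k₁ × Fin k₂)) (Fin n₁ × Fin n₂) K :=
  Matrix.of fun p c => (A p.1 ⊗ₖ B p.1) p.2 c

/-!
Let `v` be a kernel vector of the stacked matrix with at most `N` nonzero entries, `N` being the
minimum on the left, and view it as an array with rows `v_c`; let `T` be its set of nonzero rows.
The block `A_i ⊗ B_i` kills `v` iff for every row index `r` of `B_i` the vector `c ↦ (B_i v_c)_r`,
which is supported on `T`, lies in the kernel of `A_i`; so if `#T ≤ n_{A_i}`, then `B_i` kills
every row. Let `j` be the first index with `n_{A_j} < #T` (or `j = s`). Then `j ≠ 0` because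
`#T ≤ N ≤ n_{A_0}`, and the stack `B_0, …, B_{j-1}` kills every row. Some nonzero row has at most
`n_{B_0 + ⋯ + B_{j-1}}` nonzero entries: for `j = s` since it has at most `N`, and for `j < s` by
pigeonhole, the `#T > n_{A_j}` rows sharing at most `N ≤ n_{A_j} n_{B_0 + ⋯ + B_{j-1}}` entries.
Lying in the kernel of that stack, this row is zero, which is absurd.
-/

open Matrix Finset

section colIndepMax

variable {K m n : Type*} [Field K] [Fintype n]

theorem colIndepMax_isGreatest (A : Matrix m n K) :
    IsGreatest {j | j ≤ Fintype.card n ∧ ∀ t : Finset n, #t = j → LinearIndepOn K Aᵀ (t : Set n)}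
      (colIndepMax A) :=
  have hzero : ∀ t : Finset n, #t = 0 → LinearIndepOn K Aᵀ (t : Set n) := fun t ht => by
    rw [card_eq_zero.mp ht, coe_empty]
    exact linearIndepOn_empty K _
  ⟨Nat.sSup_mem ⟨0, Nat.zero_le _, hzero⟩ ⟨Fintype.card n, fun _ h => h.1⟩,
    fun _ hj => le_csSup ⟨Fintype.card n, fun _ h => h.1⟩ hj⟩

theorem colIndepMax_le_card (A : Matrix m n K) : colIndepMax A ≤ Fintype.card n :=
  (colIndepMax_isGreatest A).1.1

theorem linearIndepOn_transpose_of_card_le_colIndepMax {A : Matrix m n K} {t : Finset n}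
    (ht : #t ≤ colIndepMax A) : LinearIndepOn K Aᵀ (t : Set n) := by
  obtain ⟨u, htu, -, hu⟩ := exists_subsuperset_card_eq t.subset_univ ht
    ((colIndepMax_le_card A).trans_eq card_univ.symm)
  exact ((colIndepMax_isGreatest A).1.2 u hu).mono (coe_subset.2 htu)

theorem mulVec_eq_sum_of_forall_notMem (A : Matrix m n K) {w : n → K} {t : Finset n}
    (hw : ∀ i ∉ t, w i = 0) : A *ᵥ w = ∑ i ∈ t, w i • Aᵀ i := by
  rw [mulVec_eq_sum, ← sum_subset t.subset_univ fun i _ hi => by simp [hw i hi]]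
  simp only [op_smul_eq_smul]

theorem eq_zero_of_mulVec_eq_zero_of_card_le {A : Matrix m n K} {w : n → K} {t : Finset n}
    (hw : ∀ i ∉ t, w i = 0) (ht : #t ≤ colIndepMax A) (hA : A *ᵥ w = 0) : w = 0 := by
  funext i
  by_cases hi : i ∈ t
  · have hind := linearIndepOn_transpose_of_card_le_colIndepMax ht
    refine linearIndepOn_iff''.1 hind t w (fun _ h => h) hw ?_ i hi
    rw [← mulVec_eq_sum_of_forall_notMem A hw, hA]
  · exact hw i hi

theorem le_colIndepMax {A : Matrix m n K} {j : ℕ} (hj : j ≤ Fintype.card n)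
    (h : ∀ (w : n → K) (t : Finset n), (∀ i ∉ t, w i = 0) → #t ≤ j → A *ᵥ w = 0 → w = 0) :
    j ≤ colIndepMax A := by
  refine (colIndepMax_isGreatest A).2 ⟨hj, fun t ht => ?_⟩
  refine linearIndepOn_iff''.2 fun u g hut hg hsum i _ => congrFun (h g u hg ?_ ?_) i
  · exact (card_le_card (coe_subset.1 hut)).trans ht.le
  · rw [mulVec_eq_sum_of_forall_notMem A hg, hsum]

end colIndepMax

section kronecker

variable {K m₁ m₂ n₁ n₂ : Type*} [Fintype n₁] [Fintype n₂]

theorem kronecker_mulVec_apply [CommSemiring K] (A : Matrix m₁ n₁ K) (B : Matrix m₂ n₂ K)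
    (v : n₁ × n₂ → K) (r₁ : m₁) (r₂ : m₂) :
    ((A ⊗ₖ B) *ᵥ v) (r₁, r₂) = (A *ᵥ fun c₁ => (B *ᵥ Function.curry v c₁) r₂) r₁ := by
  simp only [mulVec, dotProduct, kroneckerMap_apply, Fintype.sum_prod_type, Finset.mul_sum,
    Function.curry_apply]
  exact sum_congr rfl fun _ _ => sum_congr rfl fun _ _ => by ring

theorem mulVec_curry_eq_zero_of_kronecker_mulVec_eq_zero [Field K] {A : Matrix m₁ n₁ K}
    {B : Matrix m₂ n₂ K} {v : n₁ × n₂ → K} {T : Finset n₁}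
    (hT : ∀ c₁ ∉ T, Function.curry v c₁ = 0) (hTA : #T ≤ colIndepMax A)
    (hv : (A ⊗ₖ B) *ᵥ v = 0) (c₁ : n₁) : B *ᵥ Function.curry v c₁ = 0 := by
  funext r₂
  have hker : A *ᵥ (fun c₁ => (B *ᵥ Function.curry v c₁) r₂) = 0 :=
    funext fun r₁ => by rw [← kronecker_mulVec_apply, hv]; rfl
  exact congrFun (eq_zero_of_mulVec_eq_zero_of_card_le (fun c hc => by simp [hT c hc]) hTA hker)
    c₁

end kronecker

theorem stackFam_mulVec_eq_zero {K : Type*} [NonUnitalNonAssocSemiring K] {s k₂ n₂ : ℕ}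
    (B : Fin s → Matrix (Fin k₂) (Fin n₂) K) {j : ℕ} (hj : j ≤ s) {w : Fin n₂ → K}
    (h : ∀ i : Fin s, (i : ℕ) < j → B i *ᵥ w = 0) : stackFam B j hj *ᵥ w = 0 := by
  funext ⟨q, r⟩
  exact congrFun (h ⟨q, q.2.trans_le hj⟩ q.2) r

theorem kronecker_mulVec_eq_zero_of_kronStack {K : Type*} [NonUnitalNonAssocSemiring K]
    {s k₁ k₂ n₁ n₂ : ℕ} {A : Fin s → Matrix (Fin k₁) (Fin n₁) K}
    {B : Fin s → Matrix (Fin k₂) (Fin n₂) K} {v : Fin n₁ × Fin n₂ → K}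
    (hv : kronStack A B *ᵥ v = 0) (i : Fin s) : (A i ⊗ₖ B i) *ᵥ v = 0 :=
  funext fun r => congrFun hv (i, r)

theorem Fin.exists_forall_lt_and_not {s : ℕ} (P : Fin s → Prop) :
    ∃ j ≤ s, (∀ i : Fin s, (i : ℕ) < j → P i) ∧ ∀ h : j < s, ¬ P ⟨j, h⟩ := by
  classical
  by_cases h : ∃ j, ∃ hj : j < s, ¬ P ⟨j, hj⟩
  · obtain ⟨hj, hP⟩ := Nat.find_spec h
    exact ⟨Nat.find h, hj.le, fun i hi => by_contra fun hPi => Nat.find_min h hi ⟨i.2, hPi⟩,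
      fun _ => hP⟩
  · push Not at h
    exact ⟨s, le_rfl, fun i _ => h i i.2, fun h => absurd h (lt_irrefl _)⟩

theorem Finset.exists_card_fiber_le_of_card_le_mul_of_lt_card {ι κ : Type*} [DecidableEq κ]
    {S : Finset ι} {T : Finset κ} (f : ι → κ) {a b : ℕ} (hS : #S ≤ a * b) (hT : a < #T) :
    ∃ y ∈ T, #{x ∈ S | f x = y} ≤ b := by
  have hlt : #S < #T * (b + 1) := by nlinarith
  obtain ⟨y, hy, hfiber⟩ := exists_card_fiber_lt_of_card_lt_mul hlt
  exact ⟨y, hy, Nat.lt_succ_iff.1 hfiber⟩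

theorem eq_zero_of_kronStack_mulVec_eq_zero {K : Type*} [Field K] {k₁ k₂ n₁ n₂ s : ℕ}
    (hs : 0 < s) {A : Fin s → Matrix (Fin k₁) (Fin n₁) K}
    {B : Fin s → Matrix (Fin k₂) (Fin n₂) K} {N : ℕ}
    (hfirst : N ≤ colIndepMax (A ⟨0, hs⟩))
    (hmid : ∀ j (hj : j < s), j ≠ 0 →
      N ≤ colIndepMax (A ⟨j, hj⟩) * colIndepMax (stackFam B j hj.le))
    (hlast : N ≤ colIndepMax (stackFam B s le_rfl))
    {v : Fin n₁ × Fin n₂ → K} {t : Finset (Fin n₁ × Fin n₂)} (hvt : ∀ p ∉ t, v p = 0)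
    (ht : #t ≤ N) (hv : kronStack A B *ᵥ v = 0) : v = 0 := by
  classical
  by_contra hne
  set S : Finset (Fin n₁ × Fin n₂) := {p | v p ≠ 0}
  have hmemS {p} : p ∈ S ↔ v p ≠ 0 := by simp [S]
  have hSN : #S ≤ N :=
    (card_le_card fun p hp => by_contra fun hpt => hmemS.1 hp (hvt p hpt)).trans ht
  set T := S.image Prod.fst
  have hT : ∀ c ∉ T, Function.curry v c = 0 := fun c hc =>
    funext fun c₂ => by_contra fun h => hc (mem_image.2 ⟨(c, c₂), hmemS.2 h, rfl⟩)
  obtain ⟨j, hj, hgood, hbad⟩ := Fin.exists_forall_lt_and_not fun i => #T ≤ colIndepMax (A i)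
  have hstack (c) : stackFam B j hj *ᵥ Function.curry v c = 0 :=
    stackFam_mulVec_eq_zero B hj fun i hi => mulVec_curry_eq_zero_of_kronecker_mulVec_eq_zero
      hT (hgood i hi) (kronecker_mulVec_eq_zero_of_kronStack hv i) c
  obtain ⟨c, hcT, hc⟩ : ∃ c ∈ T, #{p ∈ S | p.1 = c} ≤ colIndepMax (stackFam B j hj) := by
    rcases hj.lt_or_eq with hjs | rfl
    · have hj0 : j ≠ 0 := by
        rintro rfl
        exact hbad hs ((card_image_le.trans hSN).trans hfirst)
      exact exists_card_fiber_le_of_card_le_mul_of_lt_card Prod.fst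
        (hSN.trans (hmid j hjs hj0)) (not_le.1 (hbad hjs))
    · obtain ⟨c, hc⟩ := Function.ne_iff.1 hne
      exact ⟨c.1, mem_image_of_mem _ (hmemS.2 hc), (card_filter_le _ _).trans (hSN.trans hlast)⟩
  have hrow : Function.curry v c = 0 := by
    refine eq_zero_of_mulVec_eq_zero_of_card_le (t := {p ∈ S | p.1 = c}.image Prod.snd)
      (fun c₂ hc₂ => ?_) (card_image_le.trans hc) (hstack c)
    by_contra h
    exact hc₂ (mem_image.2 ⟨(c, c₂), mem_filter.2 ⟨hmemS.2 h, rfl⟩, rfl⟩)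
  obtain ⟨p, hp, rfl⟩ := mem_image.1 hcT
  exact hmemS.1 hp (congrFun hrow p.2)

theorem le_colIndepMax_kronStack {K : Type*} [Field K] {k₁ k₂ n₁ n₂ s : ℕ} (hs : 0 < s)
    (A : Fin s → Matrix (Fin k₁) (Fin n₁) K) (B : Fin s → Matrix (Fin k₂) (Fin n₂) K) {N : ℕ}
    (hfirst : N ≤ colIndepMax (A ⟨0, hs⟩))
    (hmid : ∀ j (hj : j < s), j ≠ 0 →
      N ≤ colIndepMax (A ⟨j, hj⟩) * colIndepMax (stackFam B j hj.le))
    (hlast : N ≤ colIndepMax (stackFam B s le_rfl)) :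
    N ≤ colIndepMax (kronStack A B) := by
  have hcard : N ≤ Fintype.card (Fin n₁ × Fin n₂) := by
    have h₁ : N ≤ n₁ := (hfirst.trans (colIndepMax_le_card _)).trans_eq (Fintype.card_fin _)
    have h₂ : N ≤ n₂ := (hlast.trans (colIndepMax_le_card _)).trans_eq (Fintype.card_fin _)
    rw [Fintype.card_prod, Fintype.card_fin, Fintype.card_fin]
    exact (Nat.le_mul_self N).trans (Nat.mul_le_mul h₁ h₂)
  exact le_colIndepMax hcard fun _ _ hvt ht hv =>
    eq_zero_of_kronStack_mulVec_eq_zero hs hfirst hmid hlast hvt ht hv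

theorem stmt3_general {K : Type*} [Field K] {k₁ k₂ n₁ n₂ : ℕ} {s : ℕ} (hs : 0 < s)
    (A : Fin s → Matrix (Fin k₁) (Fin n₁) K) (B : Fin s → Matrix (Fin k₂) (Fin n₂) K) :
    Finset.univ.inf' Finset.univ_nonempty (fun i : Fin (s + 1) =>
        if h0 : (i : ℕ) = 0 then colIndepMax (A ⟨0, hs⟩)
        else if hss : (i : ℕ) = s then colIndepMax (stackFam B s le_rfl)
        else colIndepMax (A ⟨(i : ℕ), lt_of_le_of_ne (Nat.lt_succ_iff.mp i.2) hss⟩) *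
          colIndepMax (stackFam B (i : ℕ) (Nat.lt_succ_iff.mp i.2)))
      ≤ colIndepMax (kronStack A B) := by
  refine le_colIndepMax_kronStack hs A B ?_ (fun j hjs hj0 => ?_) ?_
  · exact (inf'_le _ (mem_univ 0)).trans_eq (by simp)
  · exact (inf'_le _ (mem_univ ⟨j, by omega⟩)).trans_eq (by simp [hj0, hjs.ne])
  · exact (inf'_le _ (mem_univ (Fin.last s))).trans_eq (by simp [hs.ne'])

theorem stmt3 {K : Type*} [Field K] {k₁ k₂ n₁ n₂ : ℕ} {s : ℕ} (hs : 0 < s)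
    (A : Fin s → Matrix (Fin k₁) (Fin n₁) K) (B : Fin s → Matrix (Fin k₂) (Fin n₂) K)
    (hmono : ∀ i j : Fin s, i ≤ j → colIndepMax (A j) ≤ colIndepMax (A i)) :
    Finset.univ.inf' Finset.univ_nonempty (fun i : Fin (s + 1) =>
        if h0 : (i : ℕ) = 0 then colIndepMax (A ⟨0, hs⟩)
        else if hss : (i : ℕ) = s then colIndepMax (stackFam B s le_rfl)
        else colIndepMax (A ⟨(i : ℕ), lt_of_le_of_ne (Nat.lt_succ_iff.mp i.2) hss⟩) *
          colIndepMax (stackFam B (i : ℕ) (Nat.lt_succ_iff.mp i.2)))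
      ≤ colIndepMax (kronStack A B) :=
  stmt3_general hs A B
end

section
/- (Roos bound for constacyclic codes) Let N and M be nonempty subsets of Ω, the set of m-th roots of λ in the splitting field F of x^m − λ over F_q. Suppose there exists a consecutive set M′ ⊇ M with |M′| ≤ |M| + d_N − 2, where d_N is a lower bound on the minimum distance of the constacyclic code with zero set N. Then the constacyclic code over F with zero set MN := (1/α)⋃_{ε∈M} εN has minimum distance at least |M| + d_N − 1. -/
/-- Roos bound for constacyclic codes. -/
theorem stmt8 {K : Type*} [Field K] [DecidableEq K] (m : ℕ) (hm : 0 < m)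
    (lam : K) (hlam : lam ≠ 0) (α ξ : K) (hξ : IsPrimitiveRoot ξ m)
    (hα : α ^ m = lam) (hα0 : α ≠ 0)
    (M N M' : Finset K)
    (hMΩ : ∀ x ∈ M, x ^ m = lam) (hNΩ : ∀ x ∈ N, x ^ m = lam)
    (hMne : M.Nonempty) (hNne : N.Nonempty)
    (dN : ℕ)
    (hdN : ∀ c : Fin m → K,
      (∀ β ∈ N, ∑ i : Fin m, c i * β ^ (i : ℕ) = 0) → c ≠ 0 → dN ≤ hammingNorm c)
    (hM'cons : ∃ e n δ : ℕ, 2 ≤ δ ∧ 0 < n ∧ Nat.Coprime m n ∧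
      (M' : Set K) = {x | ∃ z ≤ δ - 2, x = α * ξ ^ (e + z * n)})
    (hMM' : M ⊆ M') (hcard : M'.card ≤ M.card + dN - 2) :
    ∀ c : Fin m → K,
      (∀ γ : K, (∃ ε ∈ M, ∃ ν ∈ N, γ = α⁻¹ * (ε * ν)) →
        ∑ i : Fin m, c i * γ ^ (i : ℕ) = 0) →
      c ≠ 0 → M.card + dN - 1 ≤ hammingNorm c := by
  classical
  intro c hc hc0
  obtain ⟨e, n, δ, hδ2, hn0, hmn, hM'set⟩ := hM'cons
  have hM1 : 1 ≤ M.card := Finset.card_pos.mpr hMne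
  have hMle : M.card ≤ M'.card := Finset.card_le_card hMM'
  have hdN2 : 2 ≤ dN := by by_contra h; omega
  -- the support of c
  set S : Finset (Fin m) := Finset.univ.filter (fun i => c i ≠ 0) with hS
  have hnorm : hammingNorm c = S.card := rfl
  set w : ℕ := S.card with hw
  have hSne : S.Nonempty := by
    obtain ⟨i, hi⟩ := Function.ne_iff.mp hc0
    simp only [Pi.zero_apply] at hi
    exact ⟨i, by simp [hS, hi]⟩
  have hw1 : 1 ≤ w := Finset.card_pos.mpr hSne
  have hcS : ∀ i : Fin m, i ∈ S ↔ c i ≠ 0 := by intro i; simp [hS]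
  -- the vectors v ε
  set v : K → (↥S → K) := fun ε i => c i.1 * (α⁻¹ * ε) ^ (i.1 : ℕ) with hv
  set W : Submodule K (↥S → K) := Submodule.span K (v '' ↑M) with hW
  set W' : Submodule K (↥S → K) := Submodule.span K (v '' ↑M') with hW'
  -- extension by zero
  set ext : (↥S → K) → (Fin m → K) :=
    fun x i => if h : i ∈ S then x ⟨i, h⟩ else 0 with hext
  -- every member of W gives a codeword of D_N
  have hcode : ∀ x ∈ W, ∀ β ∈ N, ∑ i : Fin m, ext x i * β ^ (i : ℕ) = 0 := by
    intro x hx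
    refine Submodule.span_induction ?_ ?_ ?_ ?_ hx
    · rintro _ ⟨ε, hε, rfl⟩ β hβ
      have := hc (α⁻¹ * (ε * β)) ⟨ε, hε, β, hβ, rfl⟩
      rw [← this]
      apply Finset.sum_congr rfl
      intro i _
      by_cases hi : i ∈ S
      · simp only [hext, dif_pos hi, hv]
        rw [mul_assoc, ← mul_pow]
        ring_nf
      · have : c i = 0 := by simpa [hS] using hi
        simp [hext, dif_neg hi, this]
    · intro β hβ; simp [hext]
    · intro x y hx hy px py β hβ
      have : ∀ i : Fin m, ext (x + y) i = ext x i + ext y i := by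
        intro i; by_cases hi : i ∈ S <;> simp [hext, hi]
      simp only [this, add_mul, Finset.sum_add_distrib, px β hβ, py β hβ, add_zero]
    · intro a x hx px β hβ
      have : ∀ i : Fin m, ext (a • x) i = a * ext x i := by
        intro i; by_cases hi : i ∈ S <;> simp [hext, hi]
      simp only [this, mul_assoc, ← Finset.mul_sum, px β hβ, mul_zero]
  -- Fact 1 : nonzero members of W have at least dN nonzero coordinates
  have hFact1 : ∀ x ∈ W, x ≠ 0 →
      dN ≤ (Finset.univ.filter (fun i : ↥S => x i ≠ 0)).card := by
    intro x hxW hx0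
    have hne : ext x ≠ 0 := by
      obtain ⟨j, hj⟩ := Function.ne_iff.mp hx0
      intro h0
      apply hj
      have := congrFun h0 j.1
      simpa [hext, j.2] using this
    have := hdN (ext x) (hcode x hxW) hne
    have hcardeq : hammingNorm (ext x)
        = (Finset.univ.filter (fun i : ↥S => x i ≠ 0)).card := by
      have himg : (Finset.univ.filter (fun i : Fin m => ext x i ≠ 0))
          = (Finset.univ.filter (fun i : ↥S => x i ≠ 0)).image Subtype.val := by
        ext i
        simp only [Finset.mem_filter, Finset.mem_univ, true_and, Finset.mem_image]
        constructor
        · intro hi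
          have hiS : i ∈ S := by
            by_contra hiS
            exact hi (by simp [hext, dif_neg hiS])
          refine ⟨⟨i, hiS⟩, ?_, rfl⟩
          simpa [hext, dif_pos hiS] using hi
        · rintro ⟨j, hj, rfl⟩
          simpa [hext, j.2] using hj
      calc hammingNorm (ext x)
          = (Finset.univ.filter (fun i : Fin m => ext x i ≠ 0)).card := rfl
        _ = _ := by rw [himg, Finset.card_image_of_injective _ Subtype.val_injective]
    omega
  -- dN ≤ w
  obtain ⟨ε₀, hε₀⟩ := hMne
  have hε₀0 : ε₀ ≠ 0 := by
    intro h
    exact hlam (by rw [← hMΩ ε₀ hε₀, h, zero_pow hm.ne'])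
  have hvε₀ : v ε₀ ≠ 0 := by
    obtain ⟨i, hi⟩ := hSne
    intro h0
    have := congrFun h0 ⟨i, hi⟩
    simp only [hv, Pi.zero_apply] at this
    rcases mul_eq_zero.mp this with h | h
    · exact ((hcS i).mp hi) h
    · exact pow_ne_zero _ (mul_ne_zero (inv_ne_zero hα0) hε₀0) h
  have hdNw : dN ≤ w := by
    have h1 := hFact1 (v ε₀) (Submodule.subset_span ⟨ε₀, hε₀, rfl⟩) hvε₀
    have h2 : (Finset.univ.filter (fun i : ↥S => v ε₀ i ≠ 0)).card ≤ w := by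
      calc _ ≤ (Finset.univ : Finset ↥S).card := Finset.card_filter_le _ _
        _ = w := by rw [Finset.card_univ, Fintype.card_coe]
    omega
  -- Fact 3 : finrank W ≤ w - (dN - 1)
  have hrW : Module.finrank K ↥W ≤ w - (dN - 1) := by
    obtain ⟨T, hTsub, hTcard⟩ :=
      Finset.exists_subset_card_eq (s := (Finset.univ : Finset ↥S)) (n := dN - 1)
        (by rw [Finset.card_univ, Fintype.card_coe]; omega)
    set Tc : Finset ↥S := Finset.univ \ T with hTc
    set f : ↥W →ₗ[K] (↥Tc → K) :=
      (LinearMap.funLeft K K (fun j : ↥Tc => (j : ↥S))).comp W.subtype with hf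
    have hfinj : Function.Injective f := by
      rw [← LinearMap.ker_eq_bot, LinearMap.ker_eq_bot']
      intro x hx0
      have hxzero : (x : ↥S → K) = 0 := by
        by_contra hne
        have h1 := hFact1 x x.2 hne
        have hsub : (Finset.univ.filter (fun i : ↥S => (x : ↥S → K) i ≠ 0)) ⊆ T := by
          intro j hj
          simp only [Finset.mem_filter, Finset.mem_univ, true_and] at hj
          by_contra hjT
          have hjTc : j ∈ Tc := by simp [hTc, hjT]
          have := congrFun hx0 ⟨j, hjTc⟩
          simp only [hf, LinearMap.comp_apply, LinearMap.funLeft_apply,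
            Submodule.subtype_apply, Pi.zero_apply] at this
          exact hj this
        have := Finset.card_le_card hsub
        omega
      exact Subtype.ext hxzero
    have := LinearMap.finrank_le_finrank_of_injective hfinj
    have hTcc : Module.finrank K (↥Tc → K) = w - (dN - 1) := by
      rw [Module.finrank_fintype_fun_eq_card, Fintype.card_coe, hTc,
        Finset.card_sdiff_of_subset hTsub, Finset.card_univ, Fintype.card_coe, hTcard]
    omega
  -- Fact 2 : finrank W' ≤ finrank W + (M'.card - M.card)
  have hrW' : Module.finrank K ↥W' ≤ Module.finrank K ↥W + (M'.card - M.card) := by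
    have hle : W' ≤ W ⊔ Submodule.span K (v '' ↑(M' \ M)) := by
      rw [hW', hW, ← Submodule.span_union]
      apply Submodule.span_mono
      rw [← Set.image_union]
      apply Set.image_mono
      intro x hx
      simp only [Finset.coe_union, Set.mem_union, Finset.mem_coe, Finset.coe_sdiff,
        Set.mem_diff] at *
      by_cases hxM : x ∈ M
      · exact Or.inl hxM
      · exact Or.inr ⟨hx, hxM⟩
    have h1 := Submodule.finrank_mono hle
    have h2 := Submodule.finrank_add_le_finrank_add_finrank W
      (Submodule.span K (v '' ↑(M' \ M)))
    have h3 : Module.finrank K ↥(Submodule.span K (v '' ↑(M' \ M)))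
        ≤ (M' \ M).card := by
      rw [← Finset.coe_image]
      exact (finrank_span_finset_le_card ((M' \ M).image v)).trans
        Finset.card_image_le
    have h4 : (M' \ M).card = M'.card - M.card := Finset.card_sdiff_of_subset hMM'
    omega
  -- card of M' is at most δ - 1
  have hM'le : M'.card ≤ δ - 1 := by
    have hsub : M' ⊆ (Finset.range (δ - 1)).image (fun z => α * ξ ^ (e + z * n)) := by
      intro x hx
      have : x ∈ (M' : Set K) := hx
      rw [hM'set] at this
      obtain ⟨z, hz, rfl⟩ := this
      exact Finset.mem_image.mpr ⟨z, Finset.mem_range.mpr (by omega), rfl⟩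
    calc M'.card ≤ _ := Finset.card_le_card hsub
      _ ≤ (Finset.range (δ - 1)).card := Finset.card_image_le
      _ = δ - 1 := Finset.card_range _
  -- Fact 4 : min (M'.card) w ≤ finrank W'
  set k : ℕ := min M'.card w with hk
  have hrk : k ≤ Module.finrank K ↥W' := by
    set g : Fin k → (↥S → K) := fun z => v (α * ξ ^ (e + (z : ℕ) * n)) with hg
    have hgmem : ∀ z : Fin k, g z ∈ W' := by
      intro z
      apply Submodule.subset_span
      refine ⟨α * ξ ^ (e + (z : ℕ) * n), ?_, rfl⟩
      have hzδ : (z : ℕ) ≤ δ - 2 := by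
        have := z.2
        omega
      have : α * ξ ^ (e + (z : ℕ) * n) ∈ (M' : Set K) := by
        rw [hM'set]; exact ⟨z, hzδ, rfl⟩
      exact this
    have hξ0 : ξ ≠ 0 := hξ.ne_zero hm.ne'
    have hprim : IsPrimitiveRoot (ξ ^ n) m := hξ.pow_of_coprime n hmn.symm
    have hli : LinearIndependent K g := by
      rw [Fintype.linearIndependent_iff]
      intro a ha
      set Q : Polynomial K :=
        ∑ z : Fin k, Polynomial.C (a z) * Polynomial.X ^ (z : ℕ) with hQ
      have hQdeg : Q.natDegree ≤ k - 1 := by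
        apply Polynomial.natDegree_sum_le_of_forall_le
        intro z _
        calc (Polynomial.C (a z) * Polynomial.X ^ (z : ℕ)).natDegree
            ≤ _ := Polynomial.natDegree_mul_le
          _ ≤ k - 1 := by
              rw [Polynomial.natDegree_C, Polynomial.natDegree_X_pow]
              have := z.2; omega
      have heval : ∀ i : ↥S, Q.eval (ξ ^ (n * ((i : Fin m) : ℕ))) = 0 := by
        intro i
        have hrel := congrFun ha i
        simp only [Finset.sum_apply, Pi.smul_apply, Pi.zero_apply, smul_eq_mul,
          hg, hv] at hrel
        have hterm : ∀ z : Fin k,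
            (α⁻¹ * (α * ξ ^ (e + (z : ℕ) * n))) ^ ((i : Fin m) : ℕ)
              = ξ ^ (e * ((i : Fin m) : ℕ)) * (ξ ^ (n * ((i : Fin m) : ℕ))) ^ (z : ℕ) := by
          intro z
          rw [inv_mul_cancel_left₀ hα0, ← pow_mul, ← pow_mul, ← pow_add]
          congr 1
          ring
        have hsum : c (i : Fin m) * ξ ^ (e * ((i : Fin m) : ℕ)) *
            ∑ z : Fin k, a z * (ξ ^ (n * ((i : Fin m) : ℕ))) ^ (z : ℕ) = 0 := by
          calc c (i : Fin m) * ξ ^ (e * ((i : Fin m) : ℕ)) *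
              ∑ z : Fin k, a z * (ξ ^ (n * ((i : Fin m) : ℕ))) ^ (z : ℕ)
              = ∑ z : Fin k, a z *
                (c (i : Fin m) * (α⁻¹ * (α * ξ ^ (e + (z : ℕ) * n))) ^ ((i : Fin m) : ℕ)) := by
                rw [Finset.mul_sum]
                apply Finset.sum_congr rfl
                intro z _
                rw [hterm z]
                ring
            _ = 0 := hrel
        have hci : c (i : Fin m) ≠ 0 := (hcS (i : Fin m)).mp i.2
        have hfac : c (i : Fin m) * ξ ^ (e * ((i : Fin m) : ℕ)) ≠ 0 :=
          mul_ne_zero hci (pow_ne_zero _ hξ0)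
        have hsum0 : ∑ z : Fin k, a z * (ξ ^ (n * ((i : Fin m) : ℕ))) ^ (z : ℕ) = 0 := by
          rcases mul_eq_zero.mp hsum with h | h
          · exact absurd h hfac
          · exact h
        simp only [hQ, Polynomial.eval_finset_sum, Polynomial.eval_mul,
          Polynomial.eval_C, Polynomial.eval_pow, Polynomial.eval_X]
        exact hsum0
      have hQ0 : Q = 0 := by
        apply Polynomial.eq_zero_of_natDegree_lt_card_of_eval_eq_zero' Q
          (S.image (fun i => ξ ^ (n * i.1)))
        · intro u hu
          obtain ⟨i, hiS, rfl⟩ := Finset.mem_image.mp hu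
          exact heval ⟨i, hiS⟩
        · have hcard : (S.image (fun i => ξ ^ (n * i.1))).card = w := by
            have hinj : Set.InjOn (fun i : Fin m => ξ ^ (n * i.1)) ↑S := by
              intro i hi j hj hij
              simp only at hij
              have hpow : (ξ ^ n) ^ (i : ℕ) = (ξ ^ n) ^ (j : ℕ) := by
                rwa [pow_mul, pow_mul] at hij
              exact Fin.ext (hprim.pow_inj i.2 j.2 hpow)
            rw [Finset.card_image_of_injOn hinj, hw]
          rw [hcard]
          have : k ≤ w := min_le_right _ _
          omega
      intro z
      have : Q.coeff (z : ℕ) = a z := by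
        rw [hQ, Polynomial.finset_sum_coeff]
        rw [Finset.sum_eq_single z]
        · simp
        · intro z' _ hz'
          rw [Polynomial.coeff_C_mul, Polynomial.coeff_X_pow, if_neg, mul_zero]
          exact fun h => hz' (Fin.ext h.symm)
        · intro h; exact absurd (Finset.mem_univ z) h
      rw [← this, hQ0, Polynomial.coeff_zero]
    have hspan : Submodule.span K (Set.range g) ≤ W' :=
      Submodule.span_le.mpr (Set.range_subset_iff.mpr hgmem)
    calc k = Module.finrank K ↥(Submodule.span K (Set.range g)) := by
          rw [finrank_span_eq_card hli, Fintype.card_fin]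
      _ ≤ _ := Submodule.finrank_mono hspan
  -- conclude by arithmetic
  rw [hnorm]
  have hkdef : k = min M'.card w := hk
  omega
end

section
/- Let N be a consecutive subset of Ω and M ⊆ Ω nonempty. If there exists a consecutive set M′ ⊇ M with |M′| < |M| + |N|, then the constacyclic code with zero set MN = (1/α)⋃_{ε∈M} εN has minimum distance at least |M| + |N|. -/
/-!
Write the consecutive sets as `N = {a₁ g^t : t < p}` and `M' = {a₂ h^z : z < q}` with `g, h`
primitive `m`-th roots of unity, so that `M = {a₂ h^z : z ∈ Z}` for some `Z ⊆ [0, q)`, `|Z| = |M|`.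
On the support `S` of a nonzero codeword `c` (`w = |S|`), put `H_z = (c_i (a₁a₂/α)^i h^{iz})_{i ∈ S}`.
The code equations say that `H_z` is killed by the `p × w` Vandermonde matrix `(g^{it})` for every
`z ∈ Z`, so `span {H_z : z ∈ Z}` (nonzero) has dimension at most `w - min(p, w)`; in particular
`p < w`. On the other hand `H_0, …, H_{q-1}` span a space of dimension `min(q, w)`, again by
Vandermonde, and at most `q - |Z|` of them lie outside `Z`. Hence `min(q, w) ≤ w - p + q - |Z|`,
which together with `q < |Z| + p` forces `|Z| + p ≤ w`.
-/

open Module Submodule Polynomial Finset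

section VandermondeRank

variable {K ι : Type*} [Field K] [Fintype ι]

theorem linearIndependent_mul_pow {u y : ι → K} (hu : ∀ i, u i ≠ 0)
    (hy : Function.Injective y) {k : ℕ} (hk : k ≤ Fintype.card ι) :
    LinearIndependent K (fun (t : Fin k) i => u i * y i ^ (t : ℕ)) := by
  rw [Fintype.linearIndependent_iff]
  intro b hb
  set P : K[X] := ∑ t : Fin k, C (b t) * X ^ (t : ℕ)
  have hroot : ∀ i, P.eval (y i) = 0 := fun i => by
    have hi := congrFun hb i
    simp only [Finset.sum_apply, Pi.smul_apply, smul_eq_mul, Pi.zero_apply,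
      mul_left_comm _ (u i), ← Finset.mul_sum] at hi
    simpa [P, eval_finsetSum] using (mul_eq_zero.mp hi).resolve_left (hu i)
  have hP : P = 0 := by
    by_contra hP0
    refine hP0 (eq_zero_of_natDegree_lt_card_of_eval_eq_zero P hy hroot ?_)
    exact ((natDegree_lt_iff_degree_lt hP0).2 (degree_sum_fin_lt b)).trans_le hk
  intro t
  simpa [P, finsetSum_coeff, coeff_C_mul_X_pow, Fin.val_inj] using congrArg (coeff · t) hP

theorem finrank_span_image_mul_pow {u y : ι → K} (hu : ∀ i, u i ≠ 0)
    (hy : Function.Injective y) (r : ℕ) :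
    finrank K (span K ((fun t i => u i * y i ^ t) '' Set.Iio r)) = min r (Fintype.card ι) := by
  classical
  refine le_antisymm (le_min ?_ ?_) ?_
  · have := finrank_span_finset_le_card (R := K) ((range r).image fun t i => u i * y i ^ t)
    simp only [coe_image, coe_range] at this
    exact this.trans (card_image_le.trans (card_range r).le)
  · simpa using Submodule.finrank_le (span K ((fun t i => u i * y i ^ t) '' Set.Iio r))
  · have hli := linearIndependent_mul_pow hu hy (min_le_right r (Fintype.card ι))
    calc min r (Fintype.card ι) = _ := by rw [finrank_span_eq_card hli, Fintype.card_fin]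
      _ ≤ _ := Submodule.finrank_mono (span_mono ?_)
    rintro _ ⟨t, rfl⟩
    exact ⟨t, lt_of_lt_of_le t.2 (min_le_left _ _), rfl⟩

theorem finrank_ker_mulVecLin_pow {x : ι → K} (hx : Function.Injective x) (p : ℕ) :
    finrank K (LinearMap.ker (Matrix.of fun (t : Fin p) i => x i ^ (t : ℕ)).mulVecLin) =
      Fintype.card ι - min p (Fintype.card ι) := by
  have hrank := LinearMap.finrank_range_add_finrank_ker
    (Matrix.of fun (t : Fin p) i => x i ^ (t : ℕ)).mulVecLin
  have hrow : Set.range (Matrix.of fun (t : Fin p) i => x i ^ (t : ℕ)).row =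
      (fun t i => (1 : ι → K) i * x i ^ t) '' Set.Iio p := by
    rw [← Fin.range_val, ← Set.range_comp]
    congr 1
    ext t i
    simp [Matrix.row]
  rw [← Matrix.rank, Matrix.rank_eq_finrank_span_row, hrow,
    finrank_span_image_mul_pow (u := 1) (fun _ => one_ne_zero) hx,
    finrank_fintype_fun_eq_card] at hrank
  omega

theorem card_add_le_card_of_sum_mul_pow_eq_zero [Nonempty ι] {u x y : ι → K}
    (hu : ∀ i, u i ≠ 0) (hx : Function.Injective x) (hy : Function.Injective y)
    (hy0 : ∀ i, y i ≠ 0) {p q : ℕ} {Z : Finset ℕ} (hZ : Z.Nonempty) (hZq : Z ⊆ range q)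
    (hq : q < #Z + p) (h : ∀ z ∈ Z, ∀ t < p, ∑ i, u i * y i ^ z * x i ^ t = 0) :
    #Z + p ≤ Fintype.card ι := by
  classical
  set H : ℕ → ι → K := fun t i => u i * y i ^ t
  set A := Matrix.of fun (t : Fin p) i => x i ^ (t : ℕ)
  have hker : span K (H '' Z) ≤ LinearMap.ker A.mulVecLin := by
    rw [span_le]
    rintro _ ⟨z, hz, rfl⟩
    ext t
    simpa [A, H, Matrix.mulVec, dotProduct, mul_comm, mul_left_comm] using h z hz t t.2
  have hpos : 1 ≤ finrank K (span K (H '' Z)) := by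
    obtain ⟨z, hz⟩ := hZ
    have hHz : H z ≠ 0 := fun h0 =>
      mul_ne_zero (hu (Classical.arbitrary ι)) (pow_ne_zero z (hy0 _)) (congrFun h0 _)
    rw [← finrank_span_singleton (K := K) hHz]
    exact finrank_mono (span_mono (by simpa using Set.mem_image_of_mem H hz))
  have hsplit : finrank K (span K (H '' Set.Iio q)) ≤
      finrank K (span K (H '' Z)) + #(range q \ Z) := by
    have hsub : H '' Set.Iio q ⊆ H '' Z ∪ ((range q \ Z).image H : Set (ι → K)) := by
      rintro _ ⟨t, ht, rfl⟩
      by_cases htZ : t ∈ Z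
      · exact Or.inl ⟨t, htZ, rfl⟩
      · exact Or.inr (by simpa using ⟨t, ⟨ht, htZ⟩, rfl⟩)
    calc _ ≤ finrank K ↥(span K (H '' Z) ⊔ span K ((range q \ Z).image H : Set (ι → K))) := by
          rw [← span_union]; exact finrank_mono (span_mono hsub)
      _ ≤ _ := finrank_add_le_finrank_add_finrank _ _
      _ ≤ _ := by gcongr; exact (finrank_span_finset_le_card _).trans card_image_le
  have hZcard : #Z ≤ q := by simpa using card_le_card hZq
  have hkerdim := finrank_mono hker
  rw [card_sdiff_of_subset hZq, card_range, finrank_span_image_mul_pow hu hy] at hsplit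
  rw [finrank_ker_mulVecLin_pow hx] at hkerdim
  omega

theorem card_add_le_hammingNorm_of_sum_mul_pow_eq_zero [DecidableEq K] {u x y : ι → K}
    (hu : u ≠ 0) (hx : Function.Injective x) (hy : Function.Injective y)
    (hy0 : ∀ i, y i ≠ 0) {p q : ℕ} {Z : Finset ℕ} (hZ : Z.Nonempty) (hZq : Z ⊆ range q)
    (hq : q < #Z + p) (h : ∀ z ∈ Z, ∀ t < p, ∑ i, u i * y i ^ z * x i ^ t = 0) :
    #Z + p ≤ hammingNorm u := by
  obtain ⟨i₀, hi₀⟩ := Function.ne_iff.mp hu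
  have : Nonempty {i // u i ≠ 0} := ⟨⟨i₀, hi₀⟩⟩
  rw [hammingNorm, ← Fintype.card_subtype]
  refine card_add_le_card_of_sum_mul_pow_eq_zero (u := fun i : {i // u i ≠ 0} => u i)
    (fun i => i.2) (hx.comp Subtype.val_injective) (hy.comp Subtype.val_injective)
    (fun i => hy0 i) hZ hZq hq fun z hz t ht => ?_
  calc ∑ i : {i // u i ≠ 0}, u i * y i ^ z * x i ^ t
      = ∑ i with u i ≠ 0, u i * y i ^ z * x i ^ t :=
        (sum_subtype _ (fun _ => mem_filter_univ _) fun i => u i * y i ^ z * x i ^ t).symm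
    _ = ∑ i, u i * y i ^ z * x i ^ t := sum_filter_of_ne fun i _ hi => by
      contrapose! hi; simp [hi]
    _ = 0 := h z hz t ht

theorem hammingNorm_mul_right [DecidableEq K] {c w : ι → K} (hw : ∀ i, w i ≠ 0) :
    hammingNorm (fun i => c i * w i) = hammingNorm c := by
  simp [hammingNorm, hw]

end VandermondeRank

section PrimitiveRoot

variable {K : Type*} [Field K]

theorem IsPrimitiveRoot.injOn_mul_pow {g a : K} {m : ℕ}
    (hg : IsPrimitiveRoot g m) (ha : a ≠ 0) : Set.InjOn (fun z : ℕ => a * g ^ z) (Set.Iio m) :=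
  fun _ hi _ hj h => hg.pow_inj hi hj (mul_left_cancel₀ ha h)

theorem IsPrimitiveRoot.coe_image_range_min [DecidableEq K] {g a : K} {m : ℕ}
    (hg : IsPrimitiveRoot g m) (hm : 0 < m) (k : ℕ) :
    (((range (min (k + 1) m)).image fun z => a * g ^ z : Finset K) : Set K) =
      {x | ∃ z ≤ k, x = a * g ^ z} := by
  ext x
  simp only [coe_image, coe_range, Set.mem_image, Set.mem_Iio, lt_min_iff, Set.mem_ofPred_eq]
  constructor
  · rintro ⟨z, ⟨hz, -⟩, rfl⟩
    exact ⟨z, by omega, rfl⟩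
  · rintro ⟨z, hz, rfl⟩
    refine ⟨z % m, ⟨by have := Nat.mod_le z m; omega, Nat.mod_lt z hm⟩, ?_⟩
    rw [hg.eq_orderOf, pow_mod_orderOf]

theorem IsPrimitiveRoot.injOn_and_image_range_card_eq [DecidableEq K] {g a : K} {m k : ℕ}
    (hg : IsPrimitiveRoot g m) (hm : 0 < m) (ha : a ≠ 0) {S : Finset K}
    (hS : (S : Set K) = {x | ∃ z ≤ k, x = a * g ^ z}) :
    Set.InjOn (fun z => a * g ^ z) (range #S) ∧ (range #S).image (fun z => a * g ^ z) = S := by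
  have hSr : S = (range (min (k + 1) m)).image fun z => a * g ^ z :=
    coe_injective (hS.trans (hg.coe_image_range_min hm k).symm)
  have hcard : #S = min (k + 1) m := by
    rw [hSr, card_image_of_injOn ((hg.injOn_mul_pow ha).mono (by simp)), card_range]
  refine ⟨(hg.injOn_mul_pow ha).mono ?_, by rw [hcard, ← hSr]⟩
  simp [hcard]

theorem IsPrimitiveRoot.injOn_and_image_range_card_eq_of_coprime [DecidableEq K]
    {ξ α : K} {m e n k : ℕ} (hξ : IsPrimitiveRoot ξ m) (hm : 0 < m) (hα : α ≠ 0)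
    (hmn : m.Coprime n) {S : Finset K}
    (hS : (S : Set K) = {x | ∃ z ≤ k, x = α * ξ ^ (e + z * n)}) :
    Set.InjOn (fun z => α * ξ ^ e * (ξ ^ n) ^ z) (range #S) ∧
      (range #S).image (fun z => α * ξ ^ e * (ξ ^ n) ^ z) = S := by
  refine (hξ.pow_of_coprime n hmn.symm).injOn_and_image_range_card_eq (k := k) hm
    (mul_ne_zero hα (pow_ne_zero e (hξ.ne_zero hm.ne'))) (hS.trans ?_)
  simp only [pow_add, ← pow_mul, mul_comm _ n, mul_assoc]

theorem IsPrimitiveRoot.card_add_le_hammingNorm [DecidableEq K] {m : ℕ} (hm : 0 < m)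
    {c : Fin m → K} (hc : c ≠ 0) {a g h : K} (ha : a ≠ 0) (hg : IsPrimitiveRoot g m)
    (hh : IsPrimitiveRoot h m) {p q : ℕ} {Z : Finset ℕ} (hZ : Z.Nonempty) (hZq : Z ⊆ range q)
    (hq : q < #Z + p)
    (hcode : ∀ z ∈ Z, ∀ t < p, ∑ i : Fin m, c i * (a * h ^ z * g ^ t) ^ (i : ℕ) = 0) :
    #Z + p ≤ hammingNorm c := by
  have hw : ∀ i : Fin m, a ^ (i : ℕ) ≠ 0 := fun i => pow_ne_zero _ ha
  rw [← hammingNorm_mul_right (c := c) hw]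
  refine card_add_le_hammingNorm_of_sum_mul_pow_eq_zero (x := fun i : Fin m => g ^ (i : ℕ))
    (y := fun i : Fin m => h ^ (i : ℕ)) ?_ (fun i j hij => Fin.ext (hg.pow_inj i.2 j.2 hij))
    (fun i j hij => Fin.ext (hh.pow_inj i.2 j.2 hij))
    (fun i => pow_ne_zero _ (hh.ne_zero hm.ne')) hZ hZq hq fun z hz t ht => ?_
  · rwa [← hammingNorm_pos_iff, hammingNorm_mul_right hw, hammingNorm_pos_iff]
  · rw [← hcode z hz t ht]
    refine sum_congr rfl fun i _ => ?_
    simp only [mul_pow, ← pow_mul]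
    ring

end PrimitiveRoot

theorem stmt9_general {K : Type*} [Field K] [DecidableEq K] (m : ℕ) (hm : 0 < m)
    (α ξ : K) (hξ : IsPrimitiveRoot ξ m)
    (hα0 : α ≠ 0)
    (M N M' : Finset K)
    (hMne : M.Nonempty)
    (hNcons : ∃ e n δ : ℕ, 2 ≤ δ ∧ 0 < n ∧ Nat.Coprime m n ∧
      (N : Set K) = {x | ∃ z ≤ δ - 2, x = α * ξ ^ (e + z * n)})
    (hM'cons : ∃ e n δ : ℕ, 2 ≤ δ ∧ 0 < n ∧ Nat.Coprime m n ∧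
      (M' : Set K) = {x | ∃ z ≤ δ - 2, x = α * ξ ^ (e + z * n)})
    (hMM' : M ⊆ M') (hcard : M'.card < M.card + N.card) :
    ∀ c : Fin m → K,
      (∀ γ : K, (∃ ε ∈ M, ∃ ν ∈ N, γ = α⁻¹ * (ε * ν)) →
        ∑ i : Fin m, c i * γ ^ (i : ℕ) = 0) →
      c ≠ 0 → M.card + N.card ≤ hammingNorm c := by
  intro c hcode hc
  obtain ⟨e, n, δ, -, -, hmn, hN⟩ := hNcons
  obtain ⟨e', n', δ', -, -, hmn', hM'⟩ := hM'cons
  obtain ⟨-, hNimg⟩ := hξ.injOn_and_image_range_card_eq_of_coprime hm hα0 hmn hN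
  obtain ⟨hM'inj, hM'img⟩ := hξ.injOn_and_image_range_card_eq_of_coprime hm hα0 hmn' hM'
  obtain ⟨Z, hZq, hZM⟩ := subset_image_iff.1 (hM'img ▸ hMM')
  have hZcard : #Z = #M := by rw [← hZM, card_image_of_injOn (hM'inj.mono (coe_subset.2 hZq))]
  rw [← hZcard]
  refine (hξ.pow_of_coprime n hmn.symm).card_add_le_hammingNorm hm hc
    (a := α * ξ ^ e' * ξ ^ e) (by simp [hα0, hξ.ne_zero hm.ne'])
    (hξ.pow_of_coprime n' hmn'.symm) (image_nonempty.1 (hZM ▸ hMne)) hZq (hZcard ▸ hcard)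
    fun z hz t ht => ?_
  have hγ : α * ξ ^ e' * ξ ^ e * (ξ ^ n') ^ z * (ξ ^ n) ^ t =
      α⁻¹ * ((α * ξ ^ e' * (ξ ^ n') ^ z) * (α * ξ ^ e * (ξ ^ n) ^ t)) := by
    field_simp
  rw [hγ]
  exact hcode _ ⟨_, hZM ▸ mem_image_of_mem _ hz, _,
    hNimg ▸ mem_image_of_mem _ (mem_range.2 ht), rfl⟩

/-- Roos bound for constacyclic codes, case of a consecutive set `N`. -/
theorem stmt9 {K : Type*} [Field K] [DecidableEq K] (m : ℕ) (hm : 0 < m)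
    (lam : K) (hlam : lam ≠ 0) (α ξ : K) (hξ : IsPrimitiveRoot ξ m)
    (hα : α ^ m = lam) (hα0 : α ≠ 0)
    (M N M' : Finset K)
    (hMΩ : ∀ x ∈ M, x ^ m = lam) (hNΩ : ∀ x ∈ N, x ^ m = lam)
    (hMne : M.Nonempty) (hNne : N.Nonempty)
    (hNcons : ∃ e n δ : ℕ, 2 ≤ δ ∧ 0 < n ∧ Nat.Coprime m n ∧
      (N : Set K) = {x | ∃ z ≤ δ - 2, x = α * ξ ^ (e + z * n)})
    (hM'cons : ∃ e n δ : ℕ, 2 ≤ δ ∧ 0 < n ∧ Nat.Coprime m n ∧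
      (M' : Set K) = {x | ∃ z ≤ δ - 2, x = α * ξ ^ (e + z * n)})
    (hMM' : M ⊆ M') (hcard : M'.card < M.card + N.card) :
    ∀ c : Fin m → K,
      (∀ γ : K, (∃ ε ∈ M, ∃ ν ∈ N, γ = α⁻¹ * (ε * ν)) →
        ∑ i : Fin m, c i * γ ^ (i : ℕ) = 0) →
      c ≠ 0 → M.card + N.card ≤ hammingNorm c :=
  stmt9_general m hm α ξ hξ hα0 M N M' hMne hNcons hM'cons hMM' hcard
end

section
/- Let C̃ ⊆ F_q[x]^ℓ be the preimage of a λ-quasi-twisted code C under reduction mod x^m − λ, with reduced Gröbner basis given by the rows of an upper-triangular ℓ×ℓ matrix G̃(x) with diagonal entries g_{j,j}(x) dividing x^m − λ. Then the F_q-dimension of C equals mℓ − Σ_{j=0}^{ℓ−1} deg(g_{j,j}(x)). -/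
open Polynomial

/-- The `F_q[x]`-submodule of `F_q[x]^ℓ` spanned by the rows of `G`. -/
noncomputable def qtSpan {F : Type*} [Field F] {ℓ : ℕ}
    (G : Matrix (Fin ℓ) (Fin ℓ) (Polynomial F)) :
    Submodule (Polynomial F) (Fin ℓ → Polynomial F) :=
  Submodule.span (Polynomial F) (Set.range fun i => G i)

/-- The `F`-linear map sending an `m × ℓ` array over `F` to the vector of
column polynomials `c_j(x) = ∑_k c_{k,j} x^k`. -/
noncomputable def toPolyL (F : Type*) [CommSemiring F] (m ℓ : ℕ) :
    (Fin m × Fin ℓ → F) →ₗ[F] (Fin ℓ → Polynomial F) where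
  toFun c := fun j => ∑ k : Fin m, Polynomial.C (c (k, j)) * Polynomial.X ^ (k : ℕ)
  map_add' c c' := by
    funext j
    simp [map_add, add_mul, Finset.sum_add_distrib]
  map_smul' a c := by
    funext j
    simp [Polynomial.smul_eq_C_mul, Finset.mul_sum, mul_assoc]

/-! Send `a = (a_j)` with `deg a_j < m - deg g_{j,j}` to the row combination `∑ a_j G̃_j`
reduced entrywise modulo `x^m - λ`. As long as `a_i = 0` for `i < j`, the triangular shape of
`G̃` makes the `j`-th entry of the result equal to `a_j g_{j,j}`, already reduced. Reading this
column by column shows that the map is injective and, since a vector of `C̃` whose entries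
before `j` vanish has its `j`-th entry divisible by `g_{j,j}`, that its image is the set of vectors
of `C̃` with entries of degree `< m`, a copy of `C`. Hence `dim C = ∑_j (m - deg g_{j,j})`. -/

open Matrix

section Triangular

variable {ι R : Type*} [Fintype ι] [LinearOrder ι]

theorem Matrix.BlockTriangular.vecMul_apply_of_forall_lt_eq_zero [NonUnitalNonAssocSemiring R]
    {G : Matrix ι ι R} (hG : G.BlockTriangular id) {c : ι → R} {j : ι}
    (hc : ∀ i < j, c i = 0) : (c ᵥ* G) j = c j * G j j := by
  refine Finset.sum_eq_single j (fun i _ hij => ?_) (by simp)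
  rcases hij.lt_or_gt with h | h
  · rw [hc i h, zero_mul]
  · exact mul_eq_zero_of_right _ (hG h)

theorem Matrix.BlockTriangular.eq_zero_of_vecMul_eq_zero [NonUnitalNonAssocSemiring R]
    [NoZeroDivisors R] {G : Matrix ι ι R} (hG : G.BlockTriangular id) (hdiag : ∀ j, G j j ≠ 0)
    {c : ι → R} {j : ι} (hv : ∀ i < j, (c ᵥ* G) i = 0) : ∀ i < j, c i = 0 := by
  intro i
  induction i using WellFoundedLT.induction with
  | _ i ih =>
    intro hij
    have hci : c i * G i i = 0 := by
      rw [← hG.vecMul_apply_of_forall_lt_eq_zero fun k hk => ih k hk (hk.trans hij), hv i hij]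
    exact (mul_eq_zero.mp hci).resolve_right (hdiag i)

end Triangular

theorem Polynomial.mul_mem_degreeLT_iff {F : Type*} [Field F] {g : F[X]} (hg : g ≠ 0)
    {n : ℕ} {b : F[X]} : b * g ∈ degreeLT F n ↔ b ∈ degreeLT F (n - g.natDegree) := by
  rcases eq_or_ne b 0 with rfl | hb
  · simp
  rw [mem_degreeLT, mem_degreeLT, ← natDegree_lt_iff_degree_lt (mul_ne_zero hb hg),
    ← natDegree_lt_iff_degree_lt hb, natDegree_mul hb hg]
  omega

theorem Polynomial.modByMonic_mem_of_forall_single_mem {R ι : Type*} [CommRing R] [Fintype ι]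
    [DecidableEq ι] {N : Submodule R[X] (ι → R[X])} {P : R[X]}
    (hPN : ∀ j, Pi.single j P ∈ N) {v : ι → R[X]} (hv : v ∈ N) :
    (fun j => v j %ₘ P) ∈ N := by
  have hmod : (fun j => v j %ₘ P) = v - ∑ j, (v j /ₘ P) • Pi.single j P := by
    ext i : 1
    simp [modByMonic_eq_sub_mul_div, Finset.sum_apply, Pi.single_apply, mul_comm]
  rw [hmod]
  exact N.sub_mem hv (N.sum_mem fun j _ => N.smul_mem _ (hPN j))

section ToPolyL

variable {F : Type*} {m ℓ : ℕ}

theorem coeff_toPolyL [CommSemiring F] (c : Fin m × Fin ℓ → F) (k : Fin m) (j : Fin ℓ) :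
    (toPolyL F m ℓ c j).coeff k = c (k, j) := by
  simp [toPolyL, Fin.val_inj]

theorem toPolyL_injective [CommSemiring F] : Function.Injective (toPolyL F m ℓ) :=
  fun c c' h => funext fun q => by
    rw [← coeff_toPolyL c, ← coeff_toPolyL c', h]

theorem range_toPolyL [CommSemiring F] :
    LinearMap.range (toPolyL F m ℓ) = Submodule.pi Set.univ fun _ => degreeLT F m := by
  ext w
  refine ⟨?_, fun hw => ⟨fun q => (w q.2).coeff q.1, funext fun j => ?_⟩⟩
  · rintro ⟨c, rfl⟩ j -
    exact mem_degreeLT.2 (degree_sum_fin_lt _)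
  · simp_rw [toPolyL, LinearMap.coe_mk, AddHom.coe_mk, C_mul_X_pow_eq_monomial]
    exact (sum_fin (monomial ·) (by simp) (mem_degreeLT.1 (hw j trivial))).trans
      (sum_monomial_eq _)

theorem finrank_comap_toPolyL [Field F] (N : Submodule F (Fin ℓ → F[X])) :
    Module.finrank F (N.comap (toPolyL F m ℓ)) =
      Module.finrank F ↥(N ⊓ Submodule.pi Set.univ fun _ => degreeLT F m) := by
  rw [(Submodule.equivMapOfInjective _ toPolyL_injective _).finrank_eq,
    Submodule.map_comap_eq, range_toPolyL, inf_comm]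

end ToPolyL

section ReducedVecMul

variable {F : Type*} [Field F] {ℓ : ℕ} {P : F[X]} {G : Matrix (Fin ℓ) (Fin ℓ) F[X]}

theorem qtSpan_eq_range_vecMulLinear (G : Matrix (Fin ℓ) (Fin ℓ) F[X]) :
    qtSpan G = LinearMap.range G.vecMulLinear := by
  rw [range_vecMulLinear, row_def, qtSpan]

theorem Matrix.BlockTriangular.dvd_apply_of_mem_qtSpan (hG : G.BlockTriangular id)
    (hdiag : ∀ j, G j j ≠ 0) {w : Fin ℓ → F[X]} (hw : w ∈ qtSpan G) {j : Fin ℓ}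
    (hz : ∀ i < j, w i = 0) : G j j ∣ w j := by
  rw [qtSpan_eq_range_vecMulLinear] at hw
  obtain ⟨c, rfl⟩ := hw
  rw [vecMulLinear_apply,
    hG.vecMul_apply_of_forall_lt_eq_zero (hG.eq_zero_of_vecMul_eq_zero hdiag hz)]
  exact dvd_mul_left _ _

variable (P G) in
noncomputable def reducedVecMul :
    ((j : Fin ℓ) → degreeLT F (P.natDegree - (G j j).natDegree)) →ₗ[F] Fin ℓ → F[X] :=
  LinearMap.pi fun j => modByMonicHom P ∘ₗ LinearMap.proj j ∘ₗ
    G.vecMulLinear.restrictScalars F ∘ₗ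
      LinearMap.pi fun i => (degreeLT F _).subtype ∘ₗ LinearMap.proj i

theorem reducedVecMul_apply (a : (j : Fin ℓ) → degreeLT F (P.natDegree - (G j j).natDegree))
    (j : Fin ℓ) : reducedVecMul P G a j = ((fun i => (a i : F[X])) ᵥ* G) j %ₘ P :=
  rfl

theorem reducedVecMul_apply_of_forall_lt_eq_zero (hP : P.Monic) (hG : G.BlockTriangular id)
    (hdiag : ∀ j, G j j ≠ 0) {a : (j : Fin ℓ) → degreeLT F (P.natDegree - (G j j).natDegree)}
    {j : Fin ℓ} (ha : ∀ i < j, a i = 0) : reducedVecMul P G a j = a j * G j j := by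
  rw [reducedVecMul_apply, hG.vecMul_apply_of_forall_lt_eq_zero fun i hi => by simp [ha i hi],
    modByMonic_eq_self_iff hP, degree_eq_natDegree hP.ne_zero]
  exact mem_degreeLT.1 ((mul_mem_degreeLT_iff (hdiag j)).2 (a j).2)

theorem reducedVecMul_injective (hP : P.Monic) (hG : G.BlockTriangular id)
    (hdiag : ∀ j, G j j ≠ 0) : Function.Injective (reducedVecMul P G) := by
  refine (injective_iff_map_eq_zero _).2 fun a ha => funext fun j => ?_
  induction j using WellFoundedLT.induction with
  | _ j ih =>
    have hj := reducedVecMul_apply_of_forall_lt_eq_zero hP hG hdiag ih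
    rw [ha, Pi.zero_apply, eq_comm, mul_eq_zero] at hj
    exact Subtype.ext (hj.resolve_right (hdiag j))

theorem range_reducedVecMul (hP : P.Monic) (hG : G.BlockTriangular id) (hdiag : ∀ j, G j j ≠ 0)
    (hPG : ∀ j, Pi.single j P ∈ qtSpan G) :
    LinearMap.range (reducedVecMul P G) =
      (qtSpan G).restrictScalars F ⊓ Submodule.pi Set.univ fun _ => degreeLT F P.natDegree := by
  set W := (qtSpan G).restrictScalars F ⊓ Submodule.pi Set.univ fun _ => degreeLT F P.natDegree
  have hle : LinearMap.range (reducedVecMul P G) ≤ W := by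
    rintro _ ⟨a, rfl⟩
    refine ⟨modByMonic_mem_of_forall_single_mem hPG ?_, fun j _ => ?_⟩
    · rw [qtSpan_eq_range_vecMulLinear]
      exact LinearMap.mem_range_self _ _
    · exact mem_degreeLT.2 <|
        (degree_modByMonic_lt _ hP).trans_eq (degree_eq_natDegree hP.ne_zero)
  refine le_antisymm hle fun w hw => ?_
  -- descending induction on the number of leading zero entries of `w`
  suffices h : ∀ k ≤ ℓ, ∀ w ∈ W, (∀ i : Fin ℓ, (i : ℕ) < k → w i = 0) →
      w ∈ LinearMap.range (reducedVecMul P G) from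
    h 0 ℓ.zero_le w hw fun i hi => absurd hi (Nat.not_lt_zero _)
  intro k hk
  induction hk using Nat.decreasingInduction with
  | self => exact fun w _ hw0 => (funext fun i => hw0 i i.2 : w = 0) ▸ zero_mem _
  | of_succ k hk ih =>
    rintro w ⟨hwG, hwdeg⟩ hw0
    let j : Fin ℓ := ⟨k, hk⟩
    obtain ⟨b, hb⟩ := hG.dvd_apply_of_mem_qtSpan hdiag hwG (j := j) fun i hi => hw0 i hi
    have hbdeg : b ∈ degreeLT F (P.natDegree - (G j j).natDegree) :=
      (mul_mem_degreeLT_iff (hdiag j)).1 (mul_comm (G j j) b ▸ hb ▸ hwdeg j trivial)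
    let a : (i : Fin ℓ) → degreeLT F (P.natDegree - (G i i).natDegree) := Pi.single j ⟨b, hbdeg⟩
    have ha : reducedVecMul P G a ∈ LinearMap.range (reducedVecMul P G) :=
      LinearMap.mem_range_self _ a
    have hrest : w - reducedVecMul P G a ∈ LinearMap.range (reducedVecMul P G) := by
      refine ih _ (W.sub_mem ⟨hwG, hwdeg⟩ (hle ha)) fun i hi => ?_
      have hij : i ≤ j := Fin.le_def.2 (Nat.lt_succ_iff.1 hi)
      rw [Pi.sub_apply, reducedVecMul_apply_of_forall_lt_eq_zero hP hG hdiag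
        fun i' hi' => Pi.single_eq_of_ne (hi'.trans_le hij).ne _]
      rcases hij.lt_or_eq with hij | rfl
      · simp [a, hw0 i hij, Pi.single_eq_of_ne hij.ne]
      · simp [a, hb, mul_comm]
    simpa using add_mem hrest ha

theorem finrank_qtSpan_inf_pi_degreeLT (hP : P.Monic) (hG : G.BlockTriangular id)
    (hdiag : ∀ j, G j j ≠ 0) (hPG : ∀ j, Pi.single j P ∈ qtSpan G) :
    Module.finrank F ↥((qtSpan G).restrictScalars F ⊓
        Submodule.pi Set.univ fun _ => degreeLT F P.natDegree) =
      ∑ j, (P.natDegree - (G j j).natDegree) := by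
  rw [← range_reducedVecMul hP hG hdiag hPG,
    LinearMap.finrank_range_of_inj (reducedVecMul_injective hP hG hdiag),
    Module.finrank_pi_fintype]
  simp [(degreeLTEquiv F _).finrank_eq]

end ReducedVecMul

theorem stmt10_general {F : Type*} [Field F] (m ℓ : ℕ) (hm : 0 < m)
    (lam : F)
    (G : Matrix (Fin ℓ) (Fin ℓ) (Polynomial F))
    (hupper : ∀ i j, j < i → G i j = 0)
    (hmonic : ∀ j, (G j j).Monic)
    (hdiag : ∀ j, G j j ∣ X ^ m - C lam)
    (hK : ∀ j : Fin ℓ, (fun j' => if j' = j then X ^ m - C lam else 0) ∈ qtSpan G) :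
    Module.finrank F
        ↥(Submodule.comap (toPolyL F m ℓ) ((qtSpan G).restrictScalars F)) =
      m * ℓ - ∑ j, (G j j).natDegree := by
  have hP : (X ^ m - C lam).Monic := monic_X_pow_sub_C lam hm.ne'
  have hPG : ∀ j, Pi.single j (X ^ m - C lam) ∈ qtSpan G := fun j => by
    convert hK j using 1
    ext1 j'
    simp [Pi.single_apply]
  have hdeg : ∀ j, (G j j).natDegree ≤ m := fun j => by
    simpa [natDegree_X_pow_sub_C] using natDegree_le_of_dvd (hdiag j) hP.ne_zero
  have hdim := finrank_qtSpan_inf_pi_degreeLT hP (fun i j h => hupper i j h)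
    (fun j => (hmonic j).ne_zero) hPG
  rw [natDegree_X_pow_sub_C] at hdim
  rw [finrank_comap_toPolyL, hdim, Finset.sum_tsub_distrib _ fun j _ => hdeg j]
  simp [mul_comm]

/-- Dimension formula for quasi-twisted codes (Lally–Fitzpatrick). -/
theorem stmt10 {F : Type*} [Field F] [Fintype F] (m ℓ : ℕ) (hm : 0 < m) (hℓ : 0 < ℓ)
    (hco : Nat.Coprime m (Fintype.card F)) (lam : F) (hlam : lam ≠ 0)
    (G : Matrix (Fin ℓ) (Fin ℓ) (Polynomial F))
    (hupper : ∀ i j, j < i → G i j = 0)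
    (hmonic : ∀ j, (G j j).Monic)
    (hdiag : ∀ j, G j j ∣ X ^ m - C lam)
    (hdeg : ∀ i j, i < j → (G i j).degree < (G j j).degree)
    (hfull : ∀ i j, i ≠ j → G j j = X ^ m - C lam → G i j = 0)
    (hK : ∀ j : Fin ℓ, (fun j' => if j' = j then X ^ m - C lam else 0) ∈ qtSpan G) :
    Module.finrank F
        ↥(Submodule.comap (toPolyL F m ℓ) ((qtSpan G).restrictScalars F)) =
      m * ℓ - ∑ j, (G j j).natDegree :=
  stmt10_general m ℓ hm lam G hupper hmonic hdiag hK
end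

section
/- The algebraic multiplicity of any eigenvalue β of a λ-quasi-twisted code C equals its geometric multiplicity, i.e., the multiplicity of (x−β) in det(G̃(x)) = ∏_j g_{j,j}(x) equals the dimension over F of the null space of G̃(β). -/
/-!
The rows of `G̃` generate every `(x^m - λ) e_j`, so `A G̃ = (x^m - λ) I` for some
polynomial matrix `A`. Since `gcd(m, q) = 1`, `x^m - λ` is separable, so taking determinants
gives `mult_β (det A) + mult_β (det G̃) = ℓ` when `β^m = λ` (and `0` otherwise); in the first
case `A(β) G̃(β) = 0`, whence `dim ker A(β) + dim ker G̃(β) ≥ ℓ`. Geometric multiplicity never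
exceeds algebraic multiplicity: after a change of basis of `E^ℓ` starting with a basis of
`ker M(β)`, `dim ker M(β)` columns of `M` are divisible by `x - β`. So all these inequalities
are equalities.
-/

open Polynomial

open Matrix

theorem Polynomial.rootMultiplicity_pow {R : Type*} [CommRing R] [IsDomain R] (p : R[X])
    (n : ℕ) (a : R) : rootMultiplicity a (p ^ n) = n * rootMultiplicity a p := by
  classical
  rw [← count_roots, ← count_roots, roots_pow, Multiset.count_nsmul]

theorem isUnit_natCast_of_coprime_card {R : Type*} [CommRing R] [Fintype R] {m : ℕ}
    (h : m.Coprime (Fintype.card R)) : IsUnit (m : R) :=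
  isCoprime_zero_right.mp (Nat.cast_card_eq_zero R ▸ h.cast)

theorem Module.Basis.sumExtend_apply_inl {K V ι : Type*} [DivisionRing K] [AddCommGroup V]
    [Module K V] {v : ι → V} (hv : LinearIndependent K v) (i : ι) :
    Module.Basis.sumExtend hv (Sum.inl i) = v i := by
  simp only [Module.Basis.sumExtend, Module.Basis.reindex_apply, Module.Basis.coe_extend]
  rfl

namespace Matrix

theorem pow_card_dvd_det_of_dvd_cols {R ι : Type*} [CommRing R] [Fintype ι] [DecidableEq ι]
    (M : Matrix ι ι R) (p : R) (s : Finset ι) (h : ∀ i, ∀ j ∈ s, p ∣ M i j) :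
    p ^ s.card ∣ M.det := by
  have hfac : ∀ i j, ∃ c, M i j = (if j ∈ s then p else 1) * c := by
    intro i j
    split_ifs with hj
    · exact h i j hj
    · exact ⟨M i j, (one_mul _).symm⟩
  choose N hN using hfac
  rw [show M = of fun i j => (if j ∈ s then p else 1) * N i j from ext hN,
    det_mul_row (fun j => if j ∈ s then p else 1) N,
    Finset.prod_ite_mem, Finset.univ_inter, Finset.prod_const]
  exact dvd_mul_right _ _

theorem eval_mul_map_C_apply {R n : Type*} [CommRing R] [Fintype n]
    (M : Matrix n n R[X]) (P : Matrix n n R) (β : R) (i j : n) :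
    eval β ((M * P.map C) i j) = (M.map (eval β) *ᵥ Pᵀ j) i := by
  simp [mul_apply, eval_finsetSum, mulVec, dotProduct]

theorem finrank_ker_eval_le_rootMultiplicity_det {E n : Type*} [Field E] [Fintype n]
    [DecidableEq n] (M : Matrix n n E[X]) (hM : M.det ≠ 0) (β : E) :
    Module.finrank E (LinearMap.ker (M.map (eval β)).mulVecLin) ≤ rootMultiplicity β M.det := by
  set K := LinearMap.ker (M.map (eval β)).mulVecLin
  set k := Module.finrank E K
  let v : Fin k → n → E := fun i => Module.finBasis E K i
  have hv : LinearIndependent E v :=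
    (Module.finBasis E K).linearIndependent.map' K.subtype K.ker_subtype
  let b₀ := Module.Basis.sumExtend hv
  let e := (Pi.basisFun E n).indexEquiv b₀
  let b := b₀.reindex e.symm
  let P := (Pi.basisFun E n).toMatrix b
  have hP : IsUnit P.det :=
    have := (Pi.basisFun E n).invertibleToMatrix b
    isUnit_det_of_invertible P
  let s := Finset.univ.image fun c => e.symm (Sum.inl c)
  have hs : s.card = k := by
    rw [Finset.card_image_of_injective _ fun _ _ h => Sum.inl_injective (e.symm.injective h),
      Finset.card_univ, Fintype.card_fin]
  have hcols : ∀ i, ∀ j ∈ s, X - C β ∣ (M * P.map C) i j := by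
    intro i j hj
    obtain ⟨c, -, rfl⟩ := Finset.mem_image.mp hj
    have hcol : Pᵀ (e.symm (Sum.inl c)) = v c := by
      ext l
      simp [P, b, b₀, Module.Basis.toMatrix_apply, Module.Basis.sumExtend_apply_inl]
    have hker : M.map (eval β) *ᵥ v c = 0 := (Module.finBasis E K c).2
    rw [dvd_iff_isRoot, IsRoot, eval_mul_map_C_apply, hcol, hker, Pi.zero_apply]
  have hdvd := (M * P.map C).pow_card_dvd_det_of_dvd_cols _ s hcols
  rw [det_mul, show (P.map C).det = C P.det from (RingHom.map_det C P).symm, hs] at hdvd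
  exact (le_rootMultiplicity_iff hM).mpr ((isUnit_C.mpr hP).dvd_mul_right.mp hdvd)

theorem card_le_finrank_ker_add_finrank_ker_of_mul_eq_zero {K n : Type*} [Field K] [Fintype n]
    [DecidableEq n] {A B : Matrix n n K} (hAB : A * B = 0) :
    Fintype.card n ≤ Module.finrank K (LinearMap.ker A.mulVecLin) +
      Module.finrank K (LinearMap.ker B.mulVecLin) := by
  have hrange : LinearMap.range B.mulVecLin ≤ LinearMap.ker A.mulVecLin := by
    rintro _ ⟨v, rfl⟩
    simp [mulVec_mulVec, hAB]
  have hrank := LinearMap.finrank_range_add_finrank_ker B.mulVecLin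
  rw [Module.finrank_fintype_fun_eq_card] at hrank
  have := Submodule.finrank_mono hrange
  omega

theorem rootMultiplicity_det_eq_finrank_ker_of_mul_eq_smul_one {E n : Type*} [Field E]
    [Fintype n] [DecidableEq n] {A G : Matrix n n E[X]} {w : E[X]} (hAG : A * G = w • 1)
    (hw : w.Separable) (β : E) :
    rootMultiplicity β G.det = Module.finrank E (LinearMap.ker (G.map (eval β)).mulVecLin) := by
  have hdet : A.det * G.det = w ^ Fintype.card n := by
    rw [← det_mul, hAG, det_smul, det_one, mul_one]
  have hdet0 : A.det * G.det ≠ 0 := hdet ▸ pow_ne_zero _ hw.ne_zero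
  have hmult : Fintype.card n * rootMultiplicity β w =
      rootMultiplicity β A.det + rootMultiplicity β G.det := by
    rw [← rootMultiplicity_pow, ← hdet, rootMultiplicity_mul hdet0]
  have hA := A.finrank_ker_eval_le_rootMultiplicity_det (left_ne_zero_of_mul hdet0) β
  have hG := G.finrank_ker_eval_le_rootMultiplicity_det (right_ne_zero_of_mul hdet0) β
  rcases Nat.le_one_iff_eq_zero_or_eq_one.mp (rootMultiplicity_le_one_of_separable hw β)
    with hw₀ | hw₁
  · rw [hw₀] at hmult
    omega
  have hroot : eval β w = 0 := (rootMultiplicity_pos hw.ne_zero).mp (by omega)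
  have hzero : A.map (eval β) * G.map (eval β) = 0 := by
    have h := Matrix.map_mul (L := A) (M := G) (f := evalRingHom β)
    rw [hAG, coe_evalRingHom] at h
    rw [← h]
    ext i j
    by_cases hij : i = j <;> simp [hij, hroot]
  have := card_le_finrank_ker_add_finrank_ker_of_mul_eq_zero hzero
  rw [hw₁] at hmult
  omega

end Matrix

theorem exists_mul_eq_smul_one_of_mem_qtSpan {F : Type*} [Field F] {ℓ : ℕ}
    (G : Matrix (Fin ℓ) (Fin ℓ) F[X]) (w : F[X])
    (h : ∀ j : Fin ℓ, (fun j' => if j' = j then w else 0) ∈ qtSpan G) :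
    ∃ A : Matrix (Fin ℓ) (Fin ℓ) F[X], A * G = w • 1 := by
  choose A hA using fun j => (Submodule.mem_span_range_iff_exists_fun _).mp (h j)
  refine ⟨of A, ext fun j j' => ?_⟩
  have := congrFun (hA j) j'
  simp only [Finset.sum_apply, Pi.smul_apply, smul_eq_mul] at this
  simp [mul_apply, this, one_apply, eq_comm]

theorem stmt11_general {F E : Type*} [Field F] [Fintype F] [Field E] [Algebra F E]
    (m ℓ : ℕ)
    (hco : Nat.Coprime m (Fintype.card F)) (lam : F) (hlam : lam ≠ 0)
    (G : Matrix (Fin ℓ) (Fin ℓ) (Polynomial F))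
    (hupper : ∀ i j, j < i → G i j = 0)
    (hK : ∀ j : Fin ℓ, (fun j' => if j' = j then X ^ m - C lam else 0) ∈ qtSpan G)
    (β : E) :
    Polynomial.rootMultiplicity β ((∏ j, G j j).map (algebraMap F E)) =
      Module.finrank E
        ↥(LinearMap.ker (Matrix.mulVecLin
          (Matrix.of fun i j => Polynomial.aeval β (G i j)))) := by
  obtain ⟨A, hAG⟩ := exists_mul_eq_smul_one_of_mem_qtSpan G _ hK
  let φ := mapRingHom (algebraMap F E)
  have hsep : ((X ^ m - C lam).map (algebraMap F E)).Separable :=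
    (separable_X_pow_sub_C lam (isUnit_natCast_of_coprime_card hco).ne_zero hlam).map
  have hAG' : A.map φ * G.map φ = (X ^ m - C lam).map (algebraMap F E) • 1 := by
    rw [← Matrix.map_mul, hAG]
    refine ext fun i j => ?_
    by_cases h : i = j <;> simp [one_apply, h, φ]
  have hdet : (∏ j, G j j).map (algebraMap F E) = (G.map φ).det := by
    rw [← det_of_isUpperTriangular hupper, ← coe_mapRingHom, RingHom.map_det]
    rfl
  have heval : (G.map φ).map (eval β) = of fun i j => aeval β (G i j) := by
    ext i j
    simp [φ, eval_map, aeval_def]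
  rw [hdet, ← heval]
  exact rootMultiplicity_det_eq_finrank_ker_of_mul_eq_smul_one hAG' hsep β

/-- The algebraic multiplicity of an eigenvalue of a quasi-twisted code equals
its geometric multiplicity. -/
theorem stmt11 {F E : Type*} [Field F] [Fintype F] [Field E] [Algebra F E]
    (m ℓ : ℕ) (hm : 0 < m) (hℓ : 0 < ℓ)
    (hco : Nat.Coprime m (Fintype.card F)) (lam : F) (hlam : lam ≠ 0)
    (G : Matrix (Fin ℓ) (Fin ℓ) (Polynomial F))
    (hupper : ∀ i j, j < i → G i j = 0)
    (hmonic : ∀ j, (G j j).Monic)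
    (hdiag : ∀ j, G j j ∣ X ^ m - C lam)
    (hdeg : ∀ i j, i < j → (G i j).degree < (G j j).degree)
    (hfull : ∀ i j, i ≠ j → G j j = X ^ m - C lam → G i j = 0)
    (hK : ∀ j : Fin ℓ, (fun j' => if j' = j then X ^ m - C lam else 0) ∈ qtSpan G)
    (hsplit : Polynomial.Splits ((X ^ m - C lam).map (algebraMap F E)))
    (β : E) (hβ : Polynomial.aeval β (∏ j, G j j) = 0) :
    Polynomial.rootMultiplicity β ((∏ j, G j j).map (algebraMap F E)) =
      Module.finrank E
        ↥(LinearMap.ker (Matrix.mulVecLin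
          (Matrix.of fun i j => Polynomial.aeval β (G i j)))) :=
  stmt11_general m ℓ hco lam hlam G hupper hK β
end

section
/- The matrix H whose block rows are H_i = (1, β_i, …, β_i^{m−1}) ⊗ V_i over all eigenvalues β_i of a λ-QT code C (with V_i a basis matrix of the eigenspace of β_i) is a parity-check matrix for C, i.e., C = { c ∈ F_q^{mℓ} : H cᵀ = 0 }. -/
/-!
Let `M ⊆ F[x]^ℓ` be the row module of `G` and `f = toPolyL c`. Row `a` of the block `Hᵢ` applied
to `c` is `f(βᵢ) ⬝ Vᵢₐ`, and `Vᵢₐ` lies in the kernel of `G(βᵢ)`, so these checks vanish on `M`.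
Conversely, if they vanish, then at every root `γ` of `x^m - λ` the vector `f(γ)` lies in the row
space of `G(γ)`: at an eigenvalue because it annihilates the kernel of `G(γ)`, elsewhere because
`G(γ)` is invertible. Interpolating the coefficients of these row combinations gives `p` with
`f - p G` vanishing at all these roots, which are simple since `gcd(m, q) = 1`; hence `f - p G` is
a multiple of `x^m - λ` and lies in `M ⊗ E[x]`. Division with remainder by the monic diagonal of
the triangular matrix `G` shows `M ⊗ E[x] ∩ F[x]^ℓ = M`.
-/

open Polynomial

open Matrix

theorem natCast_ne_zero_of_coprime_card {F : Type*} [Field F] [Fintype F] {m : ℕ}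
    (h : m.Coprime (Fintype.card F)) : (m : F) ≠ 0 := by
  have := (Nat.isCoprime_iff_coprime.2 h).map (Int.castRingHom F)
  simp only [eq_intCast, Int.cast_natCast, FiniteField.cast_card_eq_zero,
    isCoprime_zero_right] at this
  exact this.ne_zero

theorem Polynomial.Splits.dvd_of_separable {K : Type*} [Field K] {P g : K[X]}
    (hsplit : P.Splits) (hsep : P.Separable) (hg : ∀ γ ∈ P.roots, g.IsRoot γ) : P ∣ g := by
  rcases eq_or_ne g 0 with rfl | hg0
  · exact dvd_zero P
  rw [hsplit.eq_prod_roots]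
  refine (isUnit_C.2 (leadingCoeff_ne_zero.2 hsep.ne_zero).isUnit).mul_left_dvd |>.2 ?_
  refine (Multiset.prod_X_sub_C_dvd_iff_le_roots hg0 _).2 ?_
  exact (Multiset.le_iff_subset (nodup_roots hsep)).2 fun γ hγ => (mem_roots hg0).2 (hg γ hγ)

section RowSpace

variable {K m n : Type*} [Field K] [Fintype m] [Fintype n]

theorem exists_vecMul_eq_of_forall_mulVec_eq_zero (M : Matrix m n K) {w : n → K}
    (hw : ∀ v, M *ᵥ v = 0 → w ⬝ᵥ v = 0) : ∃ u, u ᵥ* M = w := by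
  classical
  obtain ⟨φ, hφ⟩ : dotProductEquiv K n w ∈ LinearMap.range M.mulVecLin.dualMap := by
    rw [LinearMap.range_dualMap_eq_dualAnnihilator_ker, Submodule.mem_dualAnnihilator]
    exact hw
  refine ⟨(dotProductEquiv K m).symm φ, dotProduct_eq _ _ fun v => ?_⟩
  rw [← dotProduct_mulVec, ← dotProductEquiv_apply_apply K, LinearEquiv.apply_symm_apply]
  exact congr($hφ v)

theorem exists_vecMul_eq_of_span_eq_ker {M : Matrix m n K} {s : Set (n → K)}
    (hs : Submodule.span K s = LinearMap.ker M.mulVecLin) {w : n → K}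
    (hw : ∀ v ∈ s, w ⬝ᵥ v = 0) : ∃ u, u ᵥ* M = w := by
  classical
  refine exists_vecMul_eq_of_forall_mulVec_eq_zero M fun v hv => ?_
  exact Submodule.span_le (p := LinearMap.ker (dotProductEquiv K n w)) |>.2 hw (hs.ge hv)

theorem exists_vecMul_eq_of_det_ne_zero [DecidableEq n] {M : Matrix n n K} (hM : M.det ≠ 0)
    (w : n → K) : ∃ u, u ᵥ* M = w :=
  exists_vecMul_eq_of_forall_mulVec_eq_zero M fun v hv => by
    rw [eq_zero_of_mulVec_eq_zero hM hv, dotProduct_zero]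

end RowSpace

theorem vecMul_apply_of_forall_lt_eq_zero {R n : Type*} [NonUnitalNonAssocSemiring R]
    [LinearOrder n] [Fintype n] {M : Matrix n n R} (hM : M.IsUpperTriangular) {p : n → R}
    {r : n} (hp : ∀ r' < r, p r' = 0) : (p ᵥ* M) r = p r * M r r := by
  refine Finset.sum_eq_single r (fun r' _ hr' => ?_) (by simp)
  rcases lt_or_gt_of_ne hr' with h | h
  · simp [hp r' h]
  · simp [hM h]

section QtSpan

variable {K : Type*} [Field K] {ℓ : ℕ} {G : Matrix (Fin ℓ) (Fin ℓ) K[X]}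

theorem mem_qtSpan_iff {v : Fin ℓ → K[X]} : v ∈ qtSpan G ↔ ∃ p, p ᵥ* G = v := by
  rw [qtSpan, ← row_def, ← range_vecMulLinear]
  rfl

theorem map_mem_qtSpan {L : Type*} [Field L] (φ : K →+* L) {v : Fin ℓ → K[X]}
    (hv : v ∈ qtSpan G) : (fun j => (v j).map φ) ∈ qtSpan (G.map (Polynomial.map φ)) := by
  obtain ⟨p, rfl⟩ := mem_qtSpan_iff.1 hv
  exact mem_qtSpan_iff.2
    ⟨fun r => (p r).map φ, funext fun j => ((mapRingHom φ).map_vecMul G p j).symm⟩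

theorem dotProduct_aeval_eq_zero_of_mem_qtSpan {A : Type*} [CommRing A] [Algebra K A]
    {v : Fin ℓ → K[X]} (hv : v ∈ qtSpan G) (x : A) {w : Fin ℓ → A}
    (hw : G.map (aeval x) *ᵥ w = 0) : (fun j => aeval x (v j)) ⬝ᵥ w = 0 := by
  obtain ⟨p, rfl⟩ := mem_qtSpan_iff.1 hv
  have hmap : (fun j => aeval x ((p ᵥ* G) j)) = (fun r => aeval x (p r)) ᵥ* G.map (aeval x) :=
    funext fun j => (aeval x).toRingHom.map_vecMul G p j
  rw [hmap, ← dotProduct_mulVec, hw, dotProduct_zero]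

theorem eq_zero_of_mem_qtSpan_of_degree_lt (hG : G.IsUpperTriangular) {v : Fin ℓ → K[X]}
    (hv : v ∈ qtSpan G) (hdeg : ∀ j, (v j).degree < (G j j).degree) : v = 0 := by
  obtain ⟨p, rfl⟩ := mem_qtSpan_iff.1 hv
  suffices hp : p = 0 by simp [hp]
  funext r
  induction r using WellFoundedLT.induction with
  | ind r ih =>
    by_contra hr
    have hlt := hdeg r
    rw [vecMul_apply_of_forall_lt_eq_zero hG ih, mul_comm] at hlt
    exact (degree_le_mul_left (G r r) hr).not_gt hlt

theorem exists_sub_mem_qtSpan_degree_lt (hG : G.IsUpperTriangular)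
    (hmonic : ∀ j, (G j j).Monic) (f : Fin ℓ → K[X]) :
    ∃ r, f - r ∈ qtSpan G ∧ ∀ j, (r j).degree < (G j j).degree := by
  suffices h : ∀ n ≤ ℓ, ∃ r, f - r ∈ qtSpan G ∧
      ∀ j : Fin ℓ, (j : ℕ) < n → (r j).degree < (G j j).degree by
    obtain ⟨r, hr, hdeg⟩ := h ℓ le_rfl
    exact ⟨r, hr, fun j => hdeg j j.isLt⟩
  intro n hn
  induction n with
  | zero => exact ⟨f, by simp, fun j hj => absurd hj (Nat.not_lt_zero _)⟩
  | succ n ih =>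
    obtain ⟨r, hr, hdeg⟩ := ih (by omega)
    set N : Fin ℓ := ⟨n, hn⟩
    refine ⟨r - (r N /ₘ G N N) • G N, ?_, fun j hj => ?_⟩
    · rw [sub_sub_eq_add_sub, add_sub_right_comm]
      exact add_mem hr (Submodule.smul_mem _ _ (Submodule.subset_span ⟨N, rfl⟩))
    rcases Nat.lt_succ_iff_lt_or_eq.1 hj with hj | hj
    · have hNj : G N j = 0 := hG (show j < N from hj)
      simpa [hNj] using hdeg j hj
    · obtain rfl : j = N := Fin.ext hj
      rw [Pi.sub_apply, Pi.smul_apply, smul_eq_mul, mul_comm, ← modByMonic_eq_sub_mul_div]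
      exact degree_modByMonic_lt _ (hmonic N)

theorem mem_qtSpan_of_map_mem {L : Type*} [Field L] (φ : K →+* L) (hG : G.IsUpperTriangular)
    (hmonic : ∀ j, (G j j).Monic) {f : Fin ℓ → K[X]}
    (hf : (fun j => (f j).map φ) ∈ qtSpan (G.map (Polynomial.map φ))) : f ∈ qtSpan G := by
  obtain ⟨r, hfr, hdeg⟩ := exists_sub_mem_qtSpan_degree_lt hG hmonic f
  suffices hr : r = 0 by simpa [hr] using hfr
  have hrφ : (fun j => (r j).map φ) = 0 := by
    refine eq_zero_of_mem_qtSpan_of_degree_lt (G := G.map (Polynomial.map φ))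
      (hG.map (mapRingHom φ)) ?_ fun j => ?_
    · convert sub_mem hf (map_mem_qtSpan φ hfr) using 1
      funext j
      simp [Polynomial.map_sub]
    · calc ((r j).map φ).degree ≤ (r j).degree := degree_map_le
        _ < (G j j).degree := hdeg j
        _ = _ := ((hmonic j).degree_map φ).symm
  funext j
  exact (Polynomial.map_eq_zero_iff φ.injective).1 (congrFun hrφ j)

theorem mem_qtSpan_of_forall_root {P : K[X]} (hsplit : P.Splits) (hsep : P.Separable)
    (hP : ∀ j, Pi.single j P ∈ qtSpan G) {f : Fin ℓ → K[X]}
    (hf : ∀ γ ∈ P.roots, ∃ u, u ᵥ* G.map (eval γ) = fun j => (f j).eval γ) :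
    f ∈ qtSpan G := by
  classical
  choose! u hu using hf
  set q : Fin ℓ → K[X] := fun r => Lagrange.interpolate P.roots.toFinset id (u · r)
  have hdvd : ∀ j, P ∣ (f - q ᵥ* G) j := fun j =>
    hsplit.dvd_of_separable hsep fun γ hγ => by
      have hq : (fun r => (q r).eval γ) = u γ := funext fun r =>
        Lagrange.eval_interpolate_at_node _ Function.injective_id.injOn
          (Multiset.mem_toFinset.2 hγ)
      rw [IsRoot, Pi.sub_apply, eval_sub, ← coe_evalRingHom, RingHom.map_vecMul,
        Function.comp_def, coe_evalRingHom, hq, hu γ hγ, sub_self]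
  choose g hg using hdvd
  have hmultiple : f - q ᵥ* G = ∑ j, g j • Pi.single j P := by
    rw [← Finset.univ_sum_single (f - q ᵥ* G)]
    refine Finset.sum_congr rfl fun j _ => ?_
    rw [hg j, ← Pi.single_smul', smul_eq_mul, mul_comm]
  rw [← sub_add_cancel f (q ᵥ* G), hmultiple]
  exact add_mem (sum_mem fun j _ => Submodule.smul_mem _ _ (hP j)) (mem_qtSpan_iff.2 ⟨q, rfl⟩)

theorem mem_qtSpan_of_forall_root_aeval {L : Type*} [Field L] [Algebra K L]
    (hG : G.IsUpperTriangular) (hmonic : ∀ j, (G j j).Monic) {P : K[X]}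
    (hsplit : (P.map (algebraMap K L)).Splits) (hsep : P.Separable)
    (hP : ∀ j, Pi.single j P ∈ qtSpan G) {f : Fin ℓ → K[X]}
    (hf : ∀ γ ∈ (P.map (algebraMap K L)).roots,
      ∃ u, u ᵥ* G.map (aeval γ) = fun j => aeval γ (f j)) :
    f ∈ qtSpan G := by
  refine mem_qtSpan_of_map_mem (algebraMap K L) hG hmonic
    (mem_qtSpan_of_forall_root hsplit hsep.map (fun j => ?_) fun γ hγ => ?_)
  · convert map_mem_qtSpan (algebraMap K L) (hP j) using 1
    ext1 j'
    by_cases h : j' = j <;> simp [h]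
  · have hGγ : (G.map (Polynomial.map (algebraMap K L))).map (eval γ) = G.map (aeval γ) := by
      ext
      simp [eval_map_algebraMap]
    simpa only [hGγ, eval_map_algebraMap] using hf γ hγ

end QtSpan

theorem aeval_toPolyL {F A : Type*} [CommSemiring F] [CommSemiring A] [Algebra F A] {m ℓ : ℕ}
    (c : Fin m × Fin ℓ → F) (x : A) (j : Fin ℓ) :
    aeval x (toPolyL F m ℓ c j) = ∑ k : Fin m, algebraMap F A (c (k, j)) * x ^ (k : ℕ) := by
  simp [toPolyL]

theorem mulVec_eq_zero_iff_forall_dotProduct_aeval {F E : Type*} [CommSemiring F]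
    [CommSemiring E] [Algebra F E] {m ℓ t : ℕ} {nn : Fin t → ℕ} {β : Fin t → E}
    {V : (i : Fin t) → Matrix (Fin (nn i)) (Fin ℓ) E}
    {H : Matrix ((i : Fin t) × Fin (nn i)) (Fin m × Fin ℓ) E}
    (hH : ∀ i a k j, H ⟨i, a⟩ (k, j) = β i ^ (k : ℕ) * V i a j) (c : Fin m × Fin ℓ → F) :
    (H *ᵥ fun p => algebraMap F E (c p)) = 0 ↔
      ∀ i a, (fun j => aeval (β i) (toPolyL F m ℓ c j)) ⬝ᵥ V i a = 0 := by
  have hrow : ∀ i a, (H *ᵥ fun p => algebraMap F E (c p)) ⟨i, a⟩ =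
      (fun j => aeval (β i) (toPolyL F m ℓ c j)) ⬝ᵥ V i a := fun i a => by
    simp only [mulVec, dotProduct, Fintype.sum_prod_type, hH, aeval_toPolyL, Finset.sum_mul]
    rw [Finset.sum_comm]
    exact Finset.sum_congr rfl fun j _ => Finset.sum_congr rfl fun k _ => by ring
  simp only [funext_iff, Sigma.forall, hrow, Pi.zero_apply]

theorem stmt13_general {F E : Type*} [Field F] [Fintype F] [Field E] [Algebra F E]
    (m ℓ : ℕ)
    (hco : Nat.Coprime m (Fintype.card F)) (lam : F) (hlam : lam ≠ 0)
    (G : Matrix (Fin ℓ) (Fin ℓ) (Polynomial F))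
    (hupper : ∀ i j, j < i → G i j = 0)
    (hmonic : ∀ j, (G j j).Monic)
    (hK : ∀ j : Fin ℓ, (fun j' => if j' = j then X ^ m - C lam else 0) ∈ qtSpan G)
    (hsplit : Polynomial.Splits ((X ^ m - C lam).map (algebraMap F E)))
    (t : ℕ) (β : Fin t → E)
    (hβall : ∀ x : E, Polynomial.aeval x (∏ j, G j j) = 0 → ∃ i, β i = x)
    (nn : Fin t → ℕ) (V : (i : Fin t) → Matrix (Fin (nn i)) (Fin ℓ) E)
    (hVspan : ∀ i, Submodule.span E (Set.range fun a : Fin (nn i) => V i a) =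
      LinearMap.ker (Matrix.mulVecLin
        (Matrix.of fun r c => Polynomial.aeval (β i) (G r c))))
    (H : Matrix ((i : Fin t) × Fin (nn i)) (Fin m × Fin ℓ) E)
    (hH : ∀ i a k j, H ⟨i, a⟩ (k, j) = β i ^ (k : ℕ) * V i a j) :
    ∀ c : Fin m × Fin ℓ → F,
      toPolyL F m ℓ c ∈ qtSpan G ↔
        H.mulVec (fun p => algebraMap F E (c p)) = 0 := by
  intro c
  have hG : G.IsUpperTriangular := fun i j h => hupper i j h
  rw [mulVec_eq_zero_iff_forall_dotProduct_aeval hH]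
  constructor
  · intro hc i a
    exact dotProduct_aeval_eq_zero_of_mem_qtSpan hc (β i)
      ((hVspan i).le (Submodule.subset_span ⟨a, rfl⟩))
  intro hc
  have hK' : ∀ j, Pi.single j (X ^ m - C lam) ∈ qtSpan G := fun j => by
    convert hK j using 1
    exact funext (Pi.single_apply j _)
  refine mem_qtSpan_of_forall_root_aeval hG hmonic hsplit
    (separable_X_pow_sub_C lam (natCast_ne_zero_of_coprime_card hco) hlam) hK' fun γ _ => ?_
  by_cases hγ : ∃ i, β i = γ
  · obtain ⟨i, rfl⟩ := hγ
    exact exists_vecMul_eq_of_span_eq_ker (hVspan i) (Set.forall_mem_range.2 (hc i))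
  · classical
    refine exists_vecMul_eq_of_det_ne_zero ?_ _
    rw [det_of_isUpperTriangular (hG.map (aeval γ))]
    simpa [← map_prod] using fun h => hγ (hβall γ h)

/-- The spectral matrix `H` is a parity-check matrix for the quasi-twisted code. -/
theorem stmt13 {F E : Type*} [Field F] [Fintype F] [Field E] [Algebra F E]
    (m ℓ : ℕ) (hm : 0 < m) (hℓ : 0 < ℓ)
    (hco : Nat.Coprime m (Fintype.card F)) (lam : F) (hlam : lam ≠ 0)
    (G : Matrix (Fin ℓ) (Fin ℓ) (Polynomial F))
    (hupper : ∀ i j, j < i → G i j = 0)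
    (hmonic : ∀ j, (G j j).Monic)
    (hdiag : ∀ j, G j j ∣ X ^ m - C lam)
    (hdeg : ∀ i j, i < j → (G i j).degree < (G j j).degree)
    (hfull : ∀ i j, i ≠ j → G j j = X ^ m - C lam → G i j = 0)
    (hK : ∀ j : Fin ℓ, (fun j' => if j' = j then X ^ m - C lam else 0) ∈ qtSpan G)
    (hsplit : Polynomial.Splits ((X ^ m - C lam).map (algebraMap F E)))
    (t : ℕ) (β : Fin t → E) (hβinj : Function.Injective β)
    (hβroot : ∀ i, Polynomial.aeval (β i) (∏ j, G j j) = 0)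
    (hβall : ∀ x : E, Polynomial.aeval x (∏ j, G j j) = 0 → ∃ i, β i = x)
    (nn : Fin t → ℕ) (V : (i : Fin t) → Matrix (Fin (nn i)) (Fin ℓ) E)
    (hVind : ∀ i, LinearIndependent E (fun a : Fin (nn i) => V i a))
    (hVspan : ∀ i, Submodule.span E (Set.range fun a : Fin (nn i) => V i a) =
      LinearMap.ker (Matrix.mulVecLin
        (Matrix.of fun r c => Polynomial.aeval (β i) (G r c))))
    (H : Matrix ((i : Fin t) × Fin (nn i)) (Fin m × Fin ℓ) E)
    (hH : ∀ i a k j, H ⟨i, a⟩ (k, j) = β i ^ (k : ℕ) * V i a j) :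
    ∀ c : Fin m × Fin ℓ → F,
      toPolyL F m ℓ c ∈ qtSpan G ↔
        H.mulVec (fun p => algebraMap F E (c p)) = 0 :=
  stmt13_general m ℓ hco lam hlam G hupper hmonic hK hsplit t β hβall nn V hVspan H hH
end

section
/- (Generalized spectral bound) Let C be a λ-QT code with eigenvalue set Ω̄ and let (P₁,d_{P₁}),…,(P_s,d_{P_s}) be defining set bounds with P_i ⊆ Ω̄ and d_{P₁} ≥ … ≥ d_{P_s}. Let 𝔼_{P_i} be the eigencode of V_{P_i} = ⋂_{β∈P_i}V_β. Then d(C) ≥ min{ d_{P₁}, d_{P₂}·d(𝔼_{P₁}), d_{P₃}·d(⋂_{i=1}^2 𝔼_{P_i}), …, d_{P_s}·d(⋂_{i=1}^{s−1} 𝔼_{P_i}), d(⋂_{i=1}^s 𝔼_{P_i}) }. -/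
open Polynomial

/-- Minimum Hamming distance of a set of vectors, `∞` if there is no nonzero element. -/
noncomputable def minDist {ι F : Type*} [Fintype ι] [Zero F] [DecidableEq F]
    (S : Set (ι → F)) : ℕ∞ :=
  sInf ((fun u => (hammingNorm u : ℕ∞)) '' {u ∈ S | u ≠ 0})

/-- The eigencode of a set `W ⊆ E^ℓ`: all `F`-vectors orthogonal to every element of `W`. -/
def eigencode {F E : Type*} [Field F] [Field E] [Algebra F E] {ℓ : ℕ}
    (W : Set (Fin ℓ → E)) : Set (Fin ℓ → F) :=
  {u | ∀ v ∈ W, ∑ j, v j * algebraMap F E (u j) = 0}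

/-- The common eigenspace of the eigenvalues in `P`. -/
def commonEig {F E : Type*} [Field F] [Field E] [Algebra F E] {ℓ : ℕ}
    (G : Matrix (Fin ℓ) (Fin ℓ) (Polynomial F)) (P : Finset E) : Set (Fin ℓ → E) :=
  {v | ∀ β ∈ P, (Matrix.of fun r c => Polynomial.aeval β (G r c)).mulVec v = 0}

section aux

variable {F E : Type*} [Field F] [DecidableEq F] [Field E] [Algebra F E] [DecidableEq E]

lemma minDist_le' {ι : Type*} [Fintype ι] {S : Set (ι → F)} {u : ι → F}
    (hu : u ∈ S) (h0 : u ≠ 0) : minDist S ≤ (hammingNorm u : ℕ∞) :=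
  sInf_le ⟨u, ⟨hu, h0⟩, rfl⟩

lemma le_minDist {ι : Type*} [Fintype ι] {S : Set (ι → F)} {a : ℕ∞}
    (h : ∀ u ∈ S, u ≠ 0 → a ≤ (hammingNorm u : ℕ∞)) : a ≤ minDist S :=
  le_sInf (by rintro _ ⟨u, ⟨hu, h0⟩, rfl⟩; exact h u hu h0)

lemma minDist_le'' {ι : Type*} [Fintype ι] {S : Set (ι → E)} {u : ι → E}
    (hu : u ∈ S) (h0 : u ≠ 0) : minDist S ≤ (hammingNorm u : ℕ∞) :=
  sInf_le ⟨u, ⟨hu, h0⟩, rfl⟩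

lemma span_eval {ℓ : ℕ} (G : Matrix (Fin ℓ) (Fin ℓ) (Polynomial F)) (Pt : Finset E)
    {v : Fin ℓ → E} (hv : v ∈ commonEig G Pt)
    {p : Fin ℓ → Polynomial F} (hp : p ∈ qtSpan G) :
    ∀ β ∈ Pt, ∑ j, Polynomial.aeval β (p j) * v j = 0 := by
  let M : Submodule (Polynomial F) (Fin ℓ → Polynomial F) :=
    { carrier := {p | ∀ β ∈ Pt, ∑ j, Polynomial.aeval β (p j) * v j = 0}
      add_mem' := by
        intro a b ha hb β hβ
        simp only [Pi.add_apply, map_add, add_mul, Finset.sum_add_distrib]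
        rw [ha β hβ, hb β hβ, add_zero]
      zero_mem' := by intro β hβ; simp
      smul_mem' := by
        intro a p hp β hβ
        simp only [Pi.smul_apply, smul_eq_mul, map_mul, mul_assoc, ← Finset.mul_sum]
        rw [hp β hβ, mul_zero] }
  have hle : qtSpan G ≤ M := by
    rw [qtSpan, Submodule.span_le]
    rintro _ ⟨i, rfl⟩ β hβ
    have := congrFun (hv β hβ) i
    simpa [Matrix.mulVec, dotProduct] using this
  exact hle hp

lemma rows_sum {F : Type*} [DecidableEq F] [Zero F] {m ℓ : ℕ}
    (c : Fin m × Fin ℓ → F) (K : Finset (Fin m)) :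
    ∑ k ∈ K, hammingNorm (fun j => c (k, j)) ≤ hammingNorm c := by
  classical
  have hdisj : ∀ k1 ∈ K, ∀ k2 ∈ K, k1 ≠ k2 →
      Disjoint (({j | c (k1, j) ≠ 0} : Finset (Fin ℓ)).image (fun j => (k1, j)))
        (({j | c (k2, j) ≠ 0} : Finset (Fin ℓ)).image (fun j => (k2, j))) := by
    intro k1 _ k2 _ hne
    rw [Finset.disjoint_left]
    rintro p hp1 hp2
    obtain ⟨j1, _, rfl⟩ := Finset.mem_image.mp hp1
    obtain ⟨j2, _, h⟩ := Finset.mem_image.mp hp2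
    exact hne (congrArg Prod.fst h).symm
  calc ∑ k ∈ K, hammingNorm (fun j => c (k, j))
      = ∑ k ∈ K, (({j | c (k, j) ≠ 0} : Finset (Fin ℓ)).image (fun j => (k, j))).card := by
        refine Finset.sum_congr rfl fun k _ => ?_
        rw [Finset.card_image_of_injective _ (fun a b h => (Prod.mk.injEq ..).mp h |>.2)]
        rfl
    _ = (K.biUnion fun k => ({j | c (k, j) ≠ 0} : Finset (Fin ℓ)).image (fun j => (k, j))).card :=
        (Finset.card_biUnion hdisj).symm
    _ ≤ hammingNorm c := by
        apply Finset.card_le_card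
        intro p hp
        simp only [Finset.mem_biUnion, Finset.mem_image] at hp
        obtain ⟨k, _, j, hj, rfl⟩ := hp
        simpa [hammingNorm] using (by simpa using hj : c (k, j) ≠ 0)

end aux

/-- Generalized spectral bound for quasi-twisted codes. -/
theorem stmt15 {F E : Type*} [Field F] [Fintype F] [DecidableEq F]
    [Field E] [Algebra F E] [DecidableEq E]
    (m ℓ : ℕ) (hm : 0 < m) (hℓ : 0 < ℓ)
    (hco : Nat.Coprime m (Fintype.card F)) (lam : F) (hlam : lam ≠ 0)
    (G : Matrix (Fin ℓ) (Fin ℓ) (Polynomial F))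
    (hupper : ∀ i j, j < i → G i j = 0)
    (hmonic : ∀ j, (G j j).Monic)
    (hdiag : ∀ j, G j j ∣ X ^ m - C lam)
    (hdeg : ∀ i j, i < j → (G i j).degree < (G j j).degree)
    (hfull : ∀ i j, i ≠ j → G j j = X ^ m - C lam → G i j = 0)
    (hK : ∀ j : Fin ℓ, (fun j' => if j' = j then X ^ m - C lam else 0) ∈ qtSpan G)
    (s : ℕ) (hs : 0 < s)
    (P : Fin s → Finset E) (hPne : ∀ i, (P i).Nonempty)
    (hP : ∀ i, ∀ β ∈ P i, Polynomial.aeval β (∏ j, G j j) = 0)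
    (dP : Fin s → ℕ∞) (hsorted : ∀ i j : Fin s, i ≤ j → dP j ≤ dP i)
    (hdP : ∀ i, dP i ≤
      minDist {c : Fin m → E | ∀ β ∈ P i, ∑ k : Fin m, c k * β ^ (k : ℕ) = 0}) :
    Finset.univ.inf' Finset.univ_nonempty (fun i : Fin (s + 1) =>
        if h0 : (i : ℕ) = 0 then dP ⟨0, hs⟩
        else if hss : (i : ℕ) = s then
          minDist (⋂ k : Fin s, eigencode (F := F) (commonEig G (P k)))
        else dP ⟨(i : ℕ), lt_of_le_of_ne (Nat.lt_succ_iff.mp i.2) hss⟩ *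
          minDist (⋂ k : Fin s, ⋂ _ : (k : ℕ) < (i : ℕ),
            eigencode (F := F) (commonEig G (P k))))
      ≤ minDist {c : Fin m × Fin ℓ → F | toPolyL F m ℓ c ∈ qtSpan G} := by
  classical
  refine le_minDist fun c hc hc0 => ?_
  set r : Fin m → Fin ℓ → F := fun k j => c (k, j) with hr
  by_cases hall : ∀ i : Fin s, ∀ k : Fin m, r k ∈ eigencode (F := F) (commonEig G (P i))
  · -- all rows are in all eigencodes; use branch i = s
    obtain ⟨⟨k0, j0⟩, hk0⟩ : ∃ p, c p ≠ 0 := by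
      by_contra h; push_neg at h; exact hc0 (funext fun p => h p)
    have hr0 : r k0 ≠ 0 := fun h => hk0 (congrFun h j0)
    have hmem : r k0 ∈ ⋂ k : Fin s, eigencode (F := F) (commonEig G (P k)) :=
      Set.mem_iInter.2 fun i => hall i k0
    have h1 := minDist_le' hmem hr0
    have h2 : hammingNorm (r k0) ≤ hammingNorm c := by
      have := rows_sum c {k0}
      simpa using this
    refine le_trans (Finset.inf'_le _ (Finset.mem_univ (⟨s, lt_add_one s⟩ : Fin (s + 1)))) ?_
    rw [dif_neg (show ¬ ((⟨s, lt_add_one s⟩ : Fin (s+1)) : ℕ) = 0 from hs.ne'), dif_pos rfl]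
    exact h1.trans (by exact_mod_cast h2)
  · push_neg at hall
    -- minimal bad index t
    obtain ⟨t, htmem, htmin⟩ := Finset.exists_min_image
      ({i : Fin s | ∃ k, r k ∉ eigencode (F := F) (commonEig G (P i))} : Finset (Fin s))
      id (by obtain ⟨i, hi⟩ := hall; exact ⟨i, by simpa using hi⟩)
    simp only [Finset.mem_filter] at htmem
    obtain ⟨k0, hk0⟩ : ∃ k, r k ∉ eigencode (F := F) (commonEig G (P t)) := by
      simpa using htmem
    have hmin : ∀ i : Fin s, (i : ℕ) < (t : ℕ) → ∀ k, r k ∈ eigencode (F := F) (commonEig G (P i)) := by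
      intro i hi k
      by_contra hbad
      have : t ≤ i := htmin i (by simpa using ⟨k, hbad⟩)
      omega
    rw [eigencode, Set.mem_setOf_eq] at hk0
    push_neg at hk0
    obtain ⟨v, hv, hvne⟩ := hk0
    set g : Fin m → E := fun k => ∑ j, v j * algebraMap F E (c (k, j)) with hg
    have hg0 : g k0 ≠ 0 := hvne
    have hgzero : ∀ β ∈ P t, ∑ k : Fin m, g k * β ^ (k : ℕ) = 0 := by
      intro β hβ
      have h := span_eval G (P t) hv hc β hβ
      have heval : ∀ j, Polynomial.aeval β ((toPolyL F m ℓ c) j)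
          = ∑ k : Fin m, algebraMap F E (c (k, j)) * β ^ (k : ℕ) := by
        intro j
        simp [toPolyL, map_sum]
      rw [show ∑ j, Polynomial.aeval β ((toPolyL F m ℓ c) j) * v j
          = ∑ k : Fin m, g k * β ^ (k : ℕ) from ?_] at h
      · exact h
      · simp only [heval, hg, Finset.sum_mul]
        rw [Finset.sum_comm]
        congr 1; funext k
        congr 1; funext j
        ring
    have hgmem : g ∈ {c : Fin m → E | ∀ β ∈ P t, ∑ k : Fin m, c k * β ^ (k : ℕ) = 0} := hgzero
    have hgne : g ≠ 0 := fun h => hg0 (congrFun h k0)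
    have hgd : dP t ≤ (hammingNorm g : ℕ∞) := (hdP t).trans (minDist_le'' hgmem hgne)
    set K : Finset (Fin m) := {k | g k ≠ 0} with hK'
    have hKcard : hammingNorm g = K.card := rfl
    have hrne : ∀ k ∈ K, r k ≠ 0 := by
      intro k hk h0
      have : g k = 0 := by
        simp only [hg]
        refine Finset.sum_eq_zero fun j _ => ?_
        have : c (k, j) = 0 := congrFun h0 j
        simp [this]
      have hk' : g k ≠ 0 := by simpa [hK'] using hk
      exact hk' this
    have key : ∀ D : ℕ∞, (∀ k ∈ K, D ≤ (hammingNorm (r k) : ℕ∞)) →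
        dP t * D ≤ (hammingNorm c : ℕ∞) := by
      intro D hD
      calc dP t * D ≤ (K.card : ℕ∞) * D := by
            refine mul_le_mul' ?_ le_rfl
            rw [hKcard] at hgd; exact_mod_cast hgd
        _ = ∑ _ ∈ K, D := by rw [Finset.sum_const, nsmul_eq_mul]
        _ ≤ ∑ k ∈ K, (hammingNorm (r k) : ℕ∞) := Finset.sum_le_sum hD
        _ = ((∑ k ∈ K, hammingNorm (r k) : ℕ) : ℕ∞) := by rw [Nat.cast_sum]
        _ ≤ (hammingNorm c : ℕ∞) := by exact_mod_cast rows_sum c K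
    rcases Nat.eq_zero_or_pos (t : ℕ) with ht0 | htpos
    · -- branch i = 0
      refine le_trans (Finset.inf'_le _ (Finset.mem_univ (⟨0, by omega⟩ : Fin (s + 1)))) ?_
      rw [dif_pos rfl]
      have hteq : t = ⟨0, hs⟩ := Fin.ext ht0
      rw [← hteq]
      have := key 1 (fun k hk => by
        have : hammingNorm (r k) ≠ 0 := hammingNorm_ne_zero_iff.mpr (hrne k hk)
        exact_mod_cast Nat.one_le_iff_ne_zero.mpr this)
      simpa using this
    · -- branch i = t, 0 < t < s
      have hts : (t : ℕ) < s := t.2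
      refine le_trans (Finset.inf'_le _ (Finset.mem_univ (⟨(t : ℕ), by omega⟩ : Fin (s + 1)))) ?_
      rw [dif_neg (show ¬ (((⟨(t : ℕ), by omega⟩ : Fin (s+1)) : ℕ) = 0) from htpos.ne'),
        dif_neg (show ¬ (((⟨(t : ℕ), by omega⟩ : Fin (s+1)) : ℕ) = s) from hts.ne)]
      refine key (minDist (⋂ k : Fin s, ⋂ _ : (k : ℕ) < (t : ℕ),
        eigencode (F := F) (commonEig G (P k)))) ?_
      intro k hk
      refine minDist_le' ?_ (hrne k hk)
      exact Set.mem_iInter.2 fun i => Set.mem_iInter.2 fun hi => hmin i hi k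
end

section
/- (Jensen bound for QT codes) Let C = ⊕_{i∈I} ⟨θ_i⟩ □ C_i be the concatenated decomposition of a λ-QT code with nonzero outer codes C_{i₁},…,C_{i_t} ordered so that d(C_{i₁}) ≤ … ≤ d(C_{i_t}). Then d(C) ≥ min_{1≤r≤t} { d(C_{i_r}) · d(⟨θ_{i₁}⟩ ⊕ ⋯ ⊕ ⟨θ_{i_r}⟩) }. -/
/-- Jensen bound for quasi-twisted codes, via the concatenated decomposition
`C = ⊕ᵢ ⟨θᵢ⟩ □ Cᵢ`: the inner code `⟨θᵢ⟩` is the image of the injective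
`F`-linear map `ψ i : E i → F^m`, the images being linearly independent. -/
theorem stmt18 {F : Type*} [Field F] [DecidableEq F] (m ℓ t : ℕ) (ht : 0 < t)
    (E : Fin t → Type*) [∀ i, Field (E i)] [∀ i, Algebra F (E i)] [∀ i, DecidableEq (E i)]
    (ψ : (i : Fin t) → E i →ₗ[F] (Fin m → F))
    (hinj : ∀ i, Function.Injective (ψ i))
    (hindep : ∀ v : (i : Fin t) → Fin m → F,
      (∀ i, v i ∈ LinearMap.range (ψ i)) → ∑ i, v i = 0 → ∀ i, v i = 0)
    (Cout : (i : Fin t) → Submodule (E i) (Fin ℓ → E i)) (hne : ∀ i, Cout i ≠ ⊥)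
    (hsorted : ∀ i j : Fin t, i ≤ j →
      minDist ((Cout i : Set (Fin ℓ → E i))) ≤ minDist ((Cout j : Set (Fin ℓ → E j)))) :
    Finset.univ.inf' (Finset.univ_nonempty_iff.mpr ⟨⟨0, ht⟩⟩) (fun r : Fin t =>
        minDist ((Cout r : Set (Fin ℓ → E r))) *
          minDist (((⨆ i : Fin t, ⨆ _ : i ≤ r, LinearMap.range (ψ i) :
            Submodule F (Fin m → F)) : Set (Fin m → F))))
      ≤ minDist {c : Fin m × Fin ℓ → F |
          ∃ w : (i : Fin t) → Fin ℓ → E i,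
            (∀ i, w i ∈ Cout i) ∧ c = fun p => ∑ i, ψ i (w i p.2) p.1} := by
  unfold minDist
  apply le_sInf
  rintro b ⟨c, ⟨⟨w, hw, hceq⟩, hc0⟩, rfl⟩
  -- columns of c
  set col : Fin ℓ → Fin m → F := fun j i => c (i, j) with hcoldef
  have hcol : ∀ j, col j = ∑ i, ψ i (w i j) := by
    intro j; funext i
    simp [hcoldef, hceq, Finset.sum_apply]
  have hcolzero : ∀ j, col j = 0 → ∀ i, w i j = 0 := by
    intro j h i
    have h2 := hindep (fun i => ψ i (w i j)) (fun i => ⟨_, rfl⟩)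
      (by rw [← hcol]; exact h) i
    exact hinj i (by rw [h2, map_zero])
  -- maximal nonzero index r
  have hs : (Finset.univ.filter (fun i => w i ≠ 0)).Nonempty := by
    by_contra h
    apply hc0
    rw [Finset.not_nonempty_iff_eq_empty, Finset.filter_eq_empty_iff] at h
    funext p
    rw [hceq]
    simp only [Pi.zero_apply]
    apply Finset.sum_eq_zero
    intro i _
    have : w i = 0 := by have := h (Finset.mem_univ i); simpa using this
    rw [this]; simp
  set r := (Finset.univ.filter (fun i => w i ≠ 0)).max' hs with hrdef
  have hwr : w r ≠ 0 :=
    (Finset.mem_filter.mp ((Finset.univ.filter (fun i => w i ≠ 0)).max'_mem hs)).2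
  have hmax : ∀ i, w i ≠ 0 → i ≤ r := fun i hi =>
    Finset.le_max' _ i (Finset.mem_filter.mpr ⟨Finset.mem_univ _, hi⟩)
  set V : Submodule F (Fin m → F) := ⨆ i : Fin t, ⨆ _ : i ≤ r, LinearMap.range (ψ i)
    with hVdef
  have hcolV : ∀ j, col j ∈ V := by
    intro j; rw [hcol]
    apply Submodule.sum_mem
    intro i _
    by_cases hi : i ≤ r
    · exact Submodule.mem_iSup_of_mem i (Submodule.mem_iSup_of_mem hi ⟨_, rfl⟩)
    · have hwi : w i = 0 := by
        by_contra h; exact hi (hmax i h)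
      rw [hwi]
      simp
  set N : Finset (Fin ℓ) := Finset.univ.filter (fun j => col j ≠ 0) with hNdef
  set dC : ℕ∞ := minDist ((Cout r : Set (Fin ℓ → E r))) with hdC
  set dV : ℕ∞ := minDist ((V : Set (Fin m → F))) with hdV
  have h1 : dC ≤ (hammingNorm (w r) : ℕ∞) := sInf_le ⟨w r, ⟨hw r, hwr⟩, rfl⟩
  have h2 : (hammingNorm (w r) : ℕ∞) ≤ (N.card : ℕ∞) := by
    rw [Nat.cast_le]
    apply Finset.card_le_card
    intro j hj
    rw [Finset.mem_filter] at hj ⊢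
    refine ⟨Finset.mem_univ _, fun h => hj.2 (hcolzero j h r)⟩
  have h3 : ∀ j ∈ N, dV ≤ (hammingNorm (col j) : ℕ∞) := by
    intro j hj
    exact sInf_le ⟨col j, ⟨hcolV j, (Finset.mem_filter.mp hj).2⟩, rfl⟩
  have h4 : (N.card : ℕ∞) * dV ≤ ∑ j ∈ N, (hammingNorm (col j) : ℕ∞) := by
    calc (N.card : ℕ∞) * dV = ∑ _j ∈ N, dV := by
          rw [Finset.sum_const, nsmul_eq_mul]
      _ ≤ _ := Finset.sum_le_sum h3
  have hsum : hammingNorm c = ∑ j, hammingNorm (col j) := by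
    simp only [hammingNorm, Finset.card_filter]
    rw [Fintype.sum_prod_type]
    exact Finset.sum_comm
  have h5 : ∑ j ∈ N, (hammingNorm (col j) : ℕ∞) ≤ (hammingNorm c : ℕ∞) := by
    rw [hsum, Nat.cast_sum]
    exact Finset.sum_le_sum_of_subset (Finset.subset_univ N)
  refine le_trans (Finset.inf'_le _ (Finset.mem_univ r)) ?_
  calc dC * dV ≤ (hammingNorm (w r) : ℕ∞) * dV := mul_le_mul_left h1 _
    _ ≤ (N.card : ℕ∞) * dV := mul_le_mul_left h2 _
    _ ≤ ∑ j ∈ N, (hammingNorm (col j) : ℕ∞) := h4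
    _ ≤ (hammingNorm c : ℕ∞) := h5
end
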